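/- arXiv:2505.23492 — 7 statements merged into one kernel-verified Lean document; each statement's English description precedes it below -/
import Mathlib

section
/- If T = (T_1, T_2, T_3) is a commuting triple of bounded operators on a Hilbert space such that ‖T_2‖ < 1 and ‖(αT_3 − T_1)(αT_2 − I)^{-1}‖ < 1 for all α in the closed unit disc, then the adjoint triple T* = (T_1*, T_2*, T_3*) satisfies the same conditions: ‖T_2*‖ < 1 and ‖(αT_3* − T_1*)(αT_2* − I)^{-1}‖ < 1 for all α in the closed unit disc. -/
noncomputable section

open Complex Filter ContinuousLinearMap

/-- The operator `ψ_α(T) = (αT₃ − T₁)(αT₂ − I)⁻¹` (via `Ring.inverse`, which equals the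
inverse when `αT₂ − I` is invertible, e.g. when `‖T₂‖ < 1` and `|α| ≤ 1`). -/
def psiOp {H : Type*} [NormedAddCommGroup H] [NormedSpace ℂ H]
    (α : ℂ) (T1 T2 T3 : H →L[ℂ] H) : H →L[ℂ] H :=
  (α • T3 - T1) * Ring.inverse (α • T2 - 1)

theorem commute_ring_inverse_right {R : Type*} [Ring R] {a b : R}
    (h : Commute a b) (hb : IsUnit b) : Commute a (Ring.inverse b) := by
  obtain ⟨u, rfl⟩ := hb
  rw [Ring.inverse_unit]
  exact h.units_inv_right

/-- If `T ∈ 𝓜` then `T* ∈ 𝓜`. -/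
theorem adjoint_mem_classM {H : Type*} [NormedAddCommGroup H] [InnerProductSpace ℂ H]
    [CompleteSpace H] (T1 T2 T3 : H →L[ℂ] H)
    (hc12 : Commute T1 T2) (hc13 : Commute T1 T3) (hc23 : Commute T2 T3)
    (h2 : ‖T2‖ < 1)
    (hψ : ∀ α : ℂ, ‖α‖ ≤ 1 → ‖psiOp α T1 T2 T3‖ < 1) :
    ‖adjoint T2‖ < 1 ∧
      ∀ α : ℂ, ‖α‖ ≤ 1 →
        ‖psiOp α (adjoint T1) (adjoint T2) (adjoint T3)‖ < 1 := by
  have h2' : ‖adjoint T2‖ < 1 := by rwa [← star_eq_adjoint, norm_star]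
  refine ⟨h2', fun α hα => ?_⟩
  -- the key identity: ψ_α(T*) = (ψ_{conj α}(T))*
  set β := starRingEnd ℂ α with hβ
  have hβα : ‖β‖ ≤ 1 := by rwa [Complex.norm_conj]
  have hunit : IsUnit (α • adjoint T2 - 1) := by
    have hn : ‖α • adjoint T2‖ < 1 := by
      calc ‖α • adjoint T2‖ = ‖α‖ * ‖adjoint T2‖ := by
            exact norm_smul _ _
        _ ≤ 1 * ‖adjoint T2‖ := by
            apply mul_le_mul_of_nonneg_right hα (norm_nonneg _)
        _ < 1 := by rwa [one_mul]
    have : IsUnit (1 - α • adjoint T2) := (Units.oneSub _ hn).isUnit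
    have heq : α • adjoint T2 - 1 = -(1 - α • adjoint T2) := (neg_sub _ _).symm
    rw [heq]; exact this.neg
  have hcomm : Commute (α • adjoint T3 - adjoint T1) (α • adjoint T2 - 1) := by
    have c13 : Commute (adjoint T3) (adjoint T2) := by
      rw [← star_eq_adjoint, ← star_eq_adjoint]; exact hc23.star_star.symm
    have c12 : Commute (adjoint T1) (adjoint T2) := by
      rw [← star_eq_adjoint, ← star_eq_adjoint]; exact hc12.star_star
    have c13' : Commute (α • adjoint T3) (α • adjoint T2) :=
      (c13.smul_left α).smul_right α
    have c12' : Commute (adjoint T1) (α • adjoint T2) := c12.smul_right α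
    exact (c13'.sub_left c12').sub_right (Commute.one_right _)
  have key : psiOp α (adjoint T1) (adjoint T2) (adjoint T3)
      = star (psiOp β T1 T2 T3) := by
    have hstar2 : star (β • T2 - 1) = α • adjoint T2 - 1 := by
      rw [star_sub, star_smul, star_one, star_eq_adjoint, hβ, RCLike.star_def,
        Complex.conj_conj]
    have hstar3 : star (β • T3 - T1) = α • adjoint T3 - adjoint T1 := by
      rw [star_sub, star_smul, star_eq_adjoint, star_eq_adjoint, hβ, RCLike.star_def,
        Complex.conj_conj]
    rw [psiOp, psiOp, star_mul, ← Ring.inverse_star, hstar2, hstar3]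
    exact (commute_ring_inverse_right hcomm hunit).eq
  rw [key, norm_star]
  exact hψ β hβα

end
end

section
/- If T = (T_1, T_2, T_3) is a commuting triple with ‖T_2‖ < 1 and ‖(αT_3 − T_1)(αT_2 − I)^{-1}‖ < 1 for all α in the closed unit disc, then for every r with 0 < r ≤ 1 the scaled triple r·T = (rT_1, rT_2, r²T_3) also satisfies ‖rT_2‖ < 1 and ‖(αr²T_3 − rT_1)(αrT_2 − I)^{-1}‖ < 1 for all α in the closed unit disc. -/
noncomputable section

open Complex Filter ContinuousLinearMap

lemma psiOp_scaled {H : Type*} [NormedAddCommGroup H] [NormedSpace ℂ H]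
    (α r : ℂ) (T1 T2 T3 : H →L[ℂ] H) :
    psiOp α (r • T1) (r • T2) ((r ^ 2) • T3) = r • psiOp (α * r) T1 T2 T3 := by
  unfold psiOp
  have h1 : α • (r ^ 2 • T3) - r • T1 = r • ((α * r) • T3 - T1) := by
    simp only [smul_smul, smul_sub]; ring_nf
  have h2 : α • (r • T2) - 1 = (α * r) • T2 - 1 := by
    simp [smul_smul]
  rw [h1, h2, smul_mul_assoc]

/-- If `T ∈ 𝓜` then `r·T = (rT₁, rT₂, r²T₃) ∈ 𝓜` for `0 < r ≤ 1`. -/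
theorem scaled_mem_classM {H : Type*} [NormedAddCommGroup H] [InnerProductSpace ℂ H]
    [CompleteSpace H] (T1 T2 T3 : H →L[ℂ] H)
    (hc12 : Commute T1 T2) (hc13 : Commute T1 T3) (hc23 : Commute T2 T3)
    (h2 : ‖T2‖ < 1)
    (hψ : ∀ α : ℂ, ‖α‖ ≤ 1 → ‖psiOp α T1 T2 T3‖ < 1)
    (r : ℝ) (hr0 : 0 < r) (hr1 : r ≤ 1) :
    ‖(r : ℂ) • T2‖ < 1 ∧
      ∀ α : ℂ, ‖α‖ ≤ 1 →
        ‖psiOp α ((r : ℂ) • T1) ((r : ℂ) • T2) (((r : ℂ) ^ 2) • T3)‖ < 1 := by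
  have hrn : ‖(r : ℂ)‖ = r := by
    simp [Complex.norm_real, abs_of_pos hr0]
  constructor
  · rw [norm_smul, hrn]
    calc r * ‖T2‖ ≤ 1 * ‖T2‖ := by
          exact mul_le_mul_of_nonneg_right hr1 (norm_nonneg _)
      _ = ‖T2‖ := one_mul _
      _ < 1 := h2
  · intro α hα
    rw [psiOp_scaled, norm_smul, hrn]
    have habs : ‖α * r‖ ≤ 1 := by
      rw [norm_mul]
      calc ‖α‖ * ‖(r : ℂ)‖ ≤ 1 * 1 := by
            apply mul_le_mul hα _ (norm_nonneg _) zero_le_one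
            simpa [Complex.norm_real, abs_of_pos hr0] using hr1
        _ = 1 := one_mul 1
    have := hψ (α * r) habs
    calc r * ‖psiOp (α * ↑r) T1 T2 T3‖ ≤ 1 * ‖psiOp (α * ↑r) T1 T2 T3‖ := by
          exact mul_le_mul_of_nonneg_right hr1 (norm_nonneg _)
      _ = _ := one_mul _
      _ < 1 := this

end
end

section
/- Let T = (T_1, T_2, T_3) belong to the class 𝓜, i.e., ‖T_2‖ < 1 and ‖(αT_3 − T_1)(αT_2 − I)^{-1}‖ < 1 for all |α| ≤ 1. If z = (z_1, z_2, z_3) lies in the joint approximate point spectrum of T (there is a sequence of unit vectors x_k with (T_j − z_j)x_k → 0 for j = 1,2,3), then |z_2| < 1 and |αz_3 − z_1| < |αz_2 − 1| for every α in the closed unit disc; in particular z lies in the tetrablock 𝔼. -/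
noncomputable section

open Complex Filter ContinuousLinearMap

def tetraPsi (α : ℂ) (z : ℂ × ℂ × ℂ) : ℂ := (α * z.2.2 - z.1) / (α * z.2.1 - 1)

def tetrablock : Set (ℂ × ℂ × ℂ) :=
  {z | ‖z.2.1‖ < 1 ∧ ∀ α : ℂ, ‖α‖ ≤ 1 → ‖tetraPsi α z‖ < 1}

/-- If `T ∈ 𝓜` and `z` lies in the joint approximate point spectrum of `T`, then
`|z₂| < 1`, `|αz₃ − z₁| < |αz₂ − 1|` for all `|α| ≤ 1`, and `z` lies in the tetrablock. -/
theorem approx_point_spectrum_subset_tetrablock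
    {H : Type*} [NormedAddCommGroup H] [InnerProductSpace ℂ H] [CompleteSpace H]
    (T1 T2 T3 : H →L[ℂ] H)
    (hc12 : Commute T1 T2) (hc13 : Commute T1 T3) (hc23 : Commute T2 T3)
    (h2 : ‖T2‖ < 1)
    (hψ : ∀ α : ℂ, ‖α‖ ≤ 1 → ‖psiOp α T1 T2 T3‖ < 1)
    (z : ℂ × ℂ × ℂ) (x : ℕ → H) (hx : ∀ k, ‖x k‖ = 1)
    (h1 : Tendsto (fun k => ‖(T1 - z.1 • (1 : H →L[ℂ] H)) (x k)‖) atTop (nhds 0))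
    (h2' : Tendsto (fun k => ‖(T2 - z.2.1 • (1 : H →L[ℂ] H)) (x k)‖) atTop (nhds 0))
    (h3 : Tendsto (fun k => ‖(T3 - z.2.2 • (1 : H →L[ℂ] H)) (x k)‖) atTop (nhds 0)) :
    ‖z.2.1‖ < 1 ∧
      (∀ α : ℂ, ‖α‖ ≤ 1 →
        ‖α * z.2.2 - z.1‖ < ‖α * z.2.1 - 1‖) ∧
      z ∈ tetrablock := by
  -- Part 1: |z₂| ≤ ‖T2‖ < 1
  have habs2 : ‖z.2.1‖ < 1 := by
    have hle : ‖z.2.1‖ ≤ ‖T2‖ := by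
      have key : ∀ k, ‖z.2.1‖ ≤ ‖T2‖ + ‖(T2 - z.2.1 • (1 : H →L[ℂ] H)) (x k)‖ := by
        intro k
        have : (z.2.1 • x k) = T2 (x k) - (T2 - z.2.1 • (1 : H →L[ℂ] H)) (x k) := by
          simp [sub_apply, smul_apply, one_apply]
        calc ‖z.2.1‖ = ‖z.2.1 • x k‖ := by
              rw [norm_smul, hx k, mul_one]
          _ = ‖T2 (x k) - (T2 - z.2.1 • (1 : H →L[ℂ] H)) (x k)‖ := by rw [this]
          _ ≤ ‖T2 (x k)‖ + ‖(T2 - z.2.1 • (1 : H →L[ℂ] H)) (x k)‖ := norm_sub_le _ _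
          _ ≤ ‖T2‖ + ‖(T2 - z.2.1 • (1 : H →L[ℂ] H)) (x k)‖ := by
              have := (T2.le_opNorm (x k)); rw [hx k, mul_one] at this; linarith
      have hlim : Tendsto (fun k => ‖T2‖ + ‖(T2 - z.2.1 • (1 : H →L[ℂ] H)) (x k)‖)
          atTop (nhds (‖T2‖ + 0)) := tendsto_const_nhds.add h2'
      rw [add_zero] at hlim
      exact ge_of_tendsto hlim (Eventually.of_forall key)
    linarith
  -- Part 2
  have hmain : ∀ α : ℂ, ‖α‖ ≤ 1 →
      ‖α * z.2.2 - z.1‖ < ‖α * z.2.1 - 1‖ := by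
    intro α hα
    set c := ‖psiOp α T1 T2 T3‖ with hc
    have hc1 : c < 1 := hψ α hα
    have hc0 : 0 ≤ c := norm_nonneg _
    have hαn : ‖α‖ ≤ 1 := by exact hα
    have hsm : ‖α • T2‖ < 1 := by
      rw [norm_smul]
      calc ‖α‖ * ‖T2‖ ≤ 1 * ‖T2‖ := by
            exact mul_le_mul_of_nonneg_right hαn (norm_nonneg _)
        _ = ‖T2‖ := one_mul _
        _ < 1 := h2
    have hU : IsUnit (α • T2 - 1) := by
      have hu := (Units.oneSub (α • T2) hsm).isUnit
      rw [Units.val_oneSub] at hu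
      have h' : α • T2 - 1 = -(1 - α • T2) := (neg_sub _ _).symm
      rw [h']; exact hu.neg
    have hev : ∀ v : H, psiOp α T1 T2 T3 ((α • T2 - 1) v) = (α • T3 - T1) v := by
      intro v
      have hmul : psiOp α T1 T2 T3 * (α • T2 - 1) = α • T3 - T1 := by
        unfold psiOp
        rw [mul_assoc, Ring.inverse_mul_cancel _ hU, mul_one]
      rw [← hmul]; rfl
    -- positivity of |αz₂ - 1|
    have hz2 : ‖α * z.2.1‖ < 1 := by
      rw [norm_mul]
      calc ‖α‖ * ‖z.2.1‖ ≤ 1 * ‖z.2.1‖ :=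
            mul_le_mul_of_nonneg_right hα (norm_nonneg _)
        _ = ‖z.2.1‖ := one_mul _
        _ < 1 := habs2
    have hpos : 0 < ‖α * z.2.1 - 1‖ := by
      have h1' : ‖(1 : ℂ)‖ - ‖α * z.2.1‖ ≤ ‖α * z.2.1 - 1‖ := by
        rw [norm_sub_rev]; exact norm_sub_norm_le _ _
      rw [norm_one] at h1'
      linarith
    -- per-k estimate
    have key : ∀ k, ‖α * z.2.2 - z.1‖ ≤ c * ‖α * z.2.1 - 1‖ +
        (c * ‖α‖ * ‖(T2 - z.2.1 • (1 : H →L[ℂ] H)) (x k)‖ +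
          ‖α‖ * ‖(T3 - z.2.2 • (1 : H →L[ℂ] H)) (x k)‖ +
          ‖(T1 - z.1 • (1 : H →L[ℂ] H)) (x k)‖) := by
      intro k
      set e1 := (T1 - z.1 • (1 : H →L[ℂ] H)) (x k)
      set e2 := (T2 - z.2.1 • (1 : H →L[ℂ] H)) (x k)
      set e3 := (T3 - z.2.2 • (1 : H →L[ℂ] H)) (x k)
      have hsplit3 : (α * z.2.2 - z.1) • x k = (α • T3 - T1) (x k) - (α • e3 - e1) := by
        simp only [e1, e3, ContinuousLinearMap.sub_apply, ContinuousLinearMap.smul_apply, ContinuousLinearMap.one_apply, smul_sub, smul_smul]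
        module
      have hsplit2 : (α • T2 - 1 : H →L[ℂ] H) (x k) = (α * z.2.1 - 1) • x k + α • e2 := by
        simp only [e2, ContinuousLinearMap.sub_apply, ContinuousLinearMap.smul_apply, ContinuousLinearMap.one_apply, smul_sub, smul_smul]
        module
      have hA : ‖(α • T3 - T1) (x k)‖ ≤ c * (‖α * z.2.1 - 1‖ + ‖α‖ * ‖e2‖) := by
        rw [← hev (x k)]
        calc ‖psiOp α T1 T2 T3 ((α • T2 - 1) (x k))‖
            ≤ c * ‖(α • T2 - 1 : H →L[ℂ] H) (x k)‖ := le_opNorm _ _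
          _ ≤ c * (‖α * z.2.1 - 1‖ + ‖α‖ * ‖e2‖) := by
              apply mul_le_mul_of_nonneg_left _ hc0
              rw [hsplit2]
              calc ‖(α * z.2.1 - 1) • x k + α • e2‖
                  ≤ ‖(α * z.2.1 - 1) • x k‖ + ‖α • e2‖ := norm_add_le _ _
                _ = ‖α * z.2.1 - 1‖ + ‖α‖ * ‖e2‖ := by
                    rw [norm_smul, hx k, mul_one, norm_smul]
      calc ‖α * z.2.2 - z.1‖ = ‖(α * z.2.2 - z.1) • x k‖ := by
            rw [norm_smul, hx k, mul_one]
        _ = ‖(α • T3 - T1) (x k) - (α • e3 - e1)‖ := by rw [hsplit3]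
        _ ≤ ‖(α • T3 - T1) (x k)‖ + ‖α • e3 - e1‖ := norm_sub_le _ _
        _ ≤ c * (‖α * z.2.1 - 1‖ + ‖α‖ * ‖e2‖) + (‖α • e3‖ + ‖e1‖) :=
            add_le_add hA (norm_sub_le _ _)
        _ = c * ‖α * z.2.1 - 1‖ + (c * ‖α‖ * ‖e2‖ + ‖α‖ * ‖e3‖ + ‖e1‖) := by
            rw [norm_smul]; ring
    -- take limit
    have hlim : Tendsto (fun k => c * ‖α * z.2.1 - 1‖ +
        (c * ‖α‖ * ‖(T2 - z.2.1 • (1 : H →L[ℂ] H)) (x k)‖ +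
          ‖α‖ * ‖(T3 - z.2.2 • (1 : H →L[ℂ] H)) (x k)‖ +
          ‖(T1 - z.1 • (1 : H →L[ℂ] H)) (x k)‖))
        atTop (nhds (c * ‖α * z.2.1 - 1‖ + ((c * ‖α‖) * 0 + ‖α‖ * 0 + 0))) :=
      tendsto_const_nhds.add (((tendsto_const_nhds.mul h2').add
        (tendsto_const_nhds.mul h3)).add h1)
    simp only [mul_zero, add_zero] at hlim
    have hle : ‖α * z.2.2 - z.1‖ ≤ c * ‖α * z.2.1 - 1‖ :=
      ge_of_tendsto hlim (Eventually.of_forall key)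
    calc ‖α * z.2.2 - z.1‖ ≤ c * ‖α * z.2.1 - 1‖ := hle
      _ < 1 * ‖α * z.2.1 - 1‖ := by
          exact mul_lt_mul_of_pos_right hc1 hpos
      _ = ‖α * z.2.1 - 1‖ := one_mul _
  refine ⟨habs2, hmain, habs2, fun α hα => ?_⟩
  have h := hmain α hα
  have hz2 : ‖α * z.2.1‖ < 1 := by
    rw [norm_mul]
    calc ‖α‖ * ‖z.2.1‖ ≤ 1 * ‖z.2.1‖ :=
          mul_le_mul_of_nonneg_right hα (norm_nonneg _)
      _ = ‖z.2.1‖ := one_mul _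
      _ < 1 := habs2
  have hpos : 0 < ‖α * z.2.1 - 1‖ := by
    have h1' : ‖(1 : ℂ)‖ - ‖α * z.2.1‖ ≤ ‖α * z.2.1 - 1‖ := by
      rw [norm_sub_rev]; exact norm_sub_norm_le _ _
    rw [norm_one] at h1'
    linarith
  rw [tetraPsi, norm_div, div_lt_one hpos]
  exact h

end
end

section
/- Let F be a finite subset of the tetrablock 𝔼. The set 𝒞_F of |F| × |F| matrices of the form (Γ(z,w)(1 − E(z)E(w)‾) + (1 − z₂w̄₂)Δ(z,w))_{z,w∈F}, where Γ ranges over positive C(D̄)*-valued kernels on F and Δ over positive semi-definite complex functions on F, is a closed convex cone in the space of |F| × |F| complex matrices. -/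
noncomputable section

open Complex ContinuousLinearMap
open scoped ComplexOrder

instance : CompactSpace (Metric.closedBall (0:ℂ) 1) :=
  isCompact_iff_compactSpace.mp (isCompact_closedBall 0 1)

abbrev CDisc : Type := C(Metric.closedBall (0:ℂ) 1, ℂ)

lemma tetra_denom_ne {z : ℂ × ℂ × ℂ} (hz : ‖z.2.1‖ < 1) {α : ℂ}
    (hα : ‖α‖ ≤ 1) : α * z.2.1 - 1 ≠ 0 := by
  intro h
  rw [sub_eq_zero] at h
  have hlt : ‖α * z.2.1‖ < 1 := by
    rw [norm_mul]
    calc ‖α‖ * ‖z.2.1‖ ≤ 1 * ‖z.2.1‖ := by gcongr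
      _ = ‖z.2.1‖ := one_mul _
      _ < 1 := hz
  rw [h] at hlt
  simp at hlt

/-- The function `E(z) : α ↦ ψ_α(z)` as a continuous function on the closed unit disc. -/
def tetraE (z : ℂ × ℂ × ℂ) (hz : z ∈ tetrablock) : CDisc where
  toFun := fun α => tetraPsi (α : ℂ) z
  continuous_toFun := by
    unfold tetraPsi
    apply Continuous.div
    · fun_prop
    · fun_prop
    · intro α
      apply tetra_denom_ne hz.1
      have h2 := mem_closedBall_zero_iff.mp α.2
      simpa using h2

/-- A positive `C(D̄)*`-valued kernel on a set `S ⊆ ℂ³`. -/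
def IsPosCKernel (S : Set (ℂ × ℂ × ℂ))
    (Γ : (ℂ × ℂ × ℂ) → (ℂ × ℂ × ℂ) → (CDisc →L[ℂ] ℂ)) : Prop :=
  ∀ (n : ℕ) (z : Fin n → ℂ × ℂ × ℂ), (∀ i, z i ∈ S) →
    ∀ (c : Fin n → ℂ) (f : Fin n → CDisc),
      0 ≤ ∑ i, ∑ j, (starRingEnd ℂ) (c i) * c j * Γ (z i) (z j) (f i * star (f j))

/-- Positive semi-definiteness of a scalar kernel on a set. -/
def IsPSDKernel (S : Set (ℂ × ℂ × ℂ)) (k : (ℂ × ℂ × ℂ) → (ℂ × ℂ × ℂ) → ℂ) : Prop :=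
  ∀ (n : ℕ) (z : Fin n → ℂ × ℂ × ℂ), (∀ i, z i ∈ S) → ∀ c : Fin n → ℂ,
    0 ≤ ∑ i, ∑ j, (starRingEnd ℂ) (c i) * c j * k (z i) (z j)

/-- The cone `𝒞_F` of matrices
`(Γ(z,w)(1 − E(z)E(w)‾) + (1 − z₂w̄₂)Δ(z,w))_{z,w ∈ F}`. -/
def coneCF (F : Finset (ℂ × ℂ × ℂ)) (hF : ↑F ⊆ tetrablock) :
    Set ({x // x ∈ F} → {x // x ∈ F} → ℂ) :=
  {M | ∃ (Γ : (ℂ × ℂ × ℂ) → (ℂ × ℂ × ℂ) → (CDisc →L[ℂ] ℂ))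
        (Δ : (ℂ × ℂ × ℂ) → (ℂ × ℂ × ℂ) → ℂ),
      IsPosCKernel ↑F Γ ∧ IsPSDKernel ↑F Δ ∧
      ∀ z w : {x // x ∈ F},
        M z w = Γ z w (1 - tetraE z (hF z.2) * star (tetraE w (hF w.2)))
          + (1 - (z : ℂ × ℂ × ℂ).2.1 * (starRingEnd ℂ) (w : ℂ × ℂ × ℂ).2.1) * Δ z w}


/-! ### Auxiliary lemmas -/

lemma myIsClosed_nonneg : IsClosed {x : ℂ | 0 ≤ x} := by
  have : {x : ℂ | 0 ≤ x} = Complex.re ⁻¹' Set.Ici 0 ∩ Complex.im ⁻¹' {0} := by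
    ext x
    simp [Complex.nonneg_iff, eq_comm]
  rw [this]
  exact (isClosed_Ici.preimage Complex.continuous_re).inter
    (isClosed_singleton.preimage Complex.continuous_im)
lemma exists_sqrt (h : CDisc) (hpos : ∀ α, 0 ≤ h α) : ∃ q : CDisc, h = q * star q := by
  refine ⟨⟨fun α => ((Real.sqrt ((h α).re) : ℝ) : ℂ), ?_⟩, ?_⟩
  · exact Complex.continuous_ofReal.comp (Real.continuous_sqrt.comp
      (Complex.continuous_re.comp h.continuous))
  · ext α
    have h1 := (Complex.nonneg_iff.mp (hpos α)).1
    have h2 := (Complex.nonneg_iff.mp (hpos α)).2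
    simp only [ContinuousMap.mul_apply, ContinuousMap.star_apply, ContinuousMap.coe_mk]
    rw [RCLike.star_def, Complex.conj_ofReal, ← Complex.ofReal_mul,
      Real.mul_self_sqrt h1]
    exact Complex.ext rfl h2.symm

section Kernel
variable {S : Set (ℂ × ℂ × ℂ)} {Γ : (ℂ × ℂ × ℂ) → (ℂ × ℂ × ℂ) → (CDisc →L[ℂ] ℂ)}

lemma pos_diag (hΓ : IsPosCKernel S Γ) {z} (hz : z ∈ S) (q : CDisc) :
    0 ≤ Γ z z (q * star q) := by
  have := hΓ 1 (fun _ => z) (fun _ => hz) (fun _ => 1) (fun _ => q)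
  simpa using this

lemma pos_apply (hΓ : IsPosCKernel S Γ) {z} (hz : z ∈ S) {h : CDisc}
    (hpos : ∀ α, 0 ≤ h α) : 0 ≤ Γ z z h := by
  obtain ⟨q, rfl⟩ := exists_sqrt h hpos
  exact pos_diag hΓ hz q

lemma two_point (hΓ : IsPosCKernel S Γ) {z w} (hz : z ∈ S) (hw : w ∈ S)
    (c₁ c₂ : ℂ) (f g : CDisc) :
    0 ≤ (starRingEnd ℂ) c₁ * c₁ * Γ z z (f * star f) + (starRingEnd ℂ) c₁ * c₂ * Γ z w (f * star g)
      + (starRingEnd ℂ) c₂ * c₁ * Γ w z (g * star f)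
      + (starRingEnd ℂ) c₂ * c₂ * Γ w w (g * star g) := by
  have := hΓ 2 ![z, w] (by intro i; fin_cases i <;> assumption) ![c₁, c₂] ![f, g]
  simpa [Fin.sum_univ_two, add_assoc] using this

lemma herm (hΓ : IsPosCKernel S Γ) {z w} (hz : z ∈ S) (hw : w ∈ S) (f g : CDisc) :
    Γ w z (g * star f) = (starRingEnd ℂ) (Γ z w (f * star g)) := by
  set a := Γ z w (f * star g) with ha
  set b := Γ w z (g * star f) with hb
  have hA := pos_diag hΓ hz f
  have hD := pos_diag hΓ hw g
  have hAim : (Γ z z (f * star f)).im = 0 := ((Complex.nonneg_iff.mp hA).2).symm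
  have hDim : (Γ w w (g * star g)).im = 0 := ((Complex.nonneg_iff.mp hD).2).symm
  have h1 := two_point hΓ hz hw 1 1 f g
  have h2 := two_point hΓ hz hw 1 Complex.I f g
  have e1 : a.im + b.im = 0 := by
    have := (Complex.nonneg_iff.mp h1).2
    simp only [map_one, one_mul, mul_one, Complex.add_im] at this
    rw [hAim, hDim] at this
    linarith [this.symm]
  have e2 : a.re - b.re = 0 := by
    have := (Complex.nonneg_iff.mp h2).2
    simp only [map_one, one_mul, mul_one, Complex.conj_I, Complex.add_im, Complex.mul_im,
      Complex.I_re, Complex.I_im, Complex.neg_im, Complex.neg_re, neg_mul] at this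
    rw [hAim, hDim] at this
    linarith
  apply Complex.ext
  · simp only [Complex.conj_re]; linarith
  · simp only [Complex.conj_im]; linarith

lemma diag_one_nonneg (hΓ : IsPosCKernel S Γ) {z} (hz : z ∈ S) : 0 ≤ Γ z z 1 := by
  apply pos_apply hΓ hz
  intro α
  simp [ContinuousMap.one_apply]

lemma diag_sq_le (hΓ : IsPosCKernel S Γ) {z} (hz : z ∈ S) (f : CDisc) :
    (Γ z z (f * star f)).re ≤ ‖f‖ ^ 2 * (Γ z z 1).re := by
  have key : 0 ≤ Γ z z (((‖f‖ : ℂ) ^ 2) • 1 - f * star f) := by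
    apply pos_apply hΓ hz
    intro α
    have h1 : ‖f α‖ ≤ ‖f‖ := f.norm_coe_le_norm α
    have : (((‖f‖ : ℂ) ^ 2) • (1 : CDisc) - f * star f) α
        = ((‖f‖ ^ 2 - Complex.normSq (f α) : ℝ) : ℂ) := by
      simp [ContinuousMap.smul_apply, ContinuousMap.one_apply, ContinuousMap.mul_apply,
        ContinuousMap.star_apply, RCLike.star_def, Complex.mul_conj]
    rw [this, Complex.zero_le_real]
    have : Complex.normSq (f α) = ‖f α‖ ^ 2 := by
      rw [Complex.normSq_eq_norm_sq]
    rw [this]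
    nlinarith [norm_nonneg (f α), norm_nonneg f]
  rw [map_sub, map_smul] at key
  have := (Complex.nonneg_iff.mp key).1
  simp only [Complex.sub_re, smul_eq_mul] at this
  have e : ((‖f‖ : ℂ) ^ 2 * Γ z z 1).re = ‖f‖ ^ 2 * (Γ z z 1).re := by
    rw [← Complex.ofReal_pow, Complex.re_ofReal_mul]
  rw [e] at this
  linarith

lemma norm_bound (hΓ : IsPosCKernel S Γ) {z w} (hz : z ∈ S) (hw : w ∈ S) {A : ℝ}
    (hA0 : 0 ≤ A) (hzz : (Γ z z 1).re ≤ A) (hww : (Γ w w 1).re ≤ A) (f : CDisc) :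
    ‖Γ z w f‖ ≤ A * ‖f‖ := by
  have hγz := (Complex.nonneg_iff.mp (diag_one_nonneg hΓ hz)).1
  have hγw := (Complex.nonneg_iff.mp (diag_one_nonneg hΓ hw)).1
  have hAf : (Γ z z (f * star f)).re ≤ ‖f‖ ^ 2 * A := by
    have h1 := diag_sq_le hΓ hz f
    nlinarith [sq_nonneg ‖f‖]
  set a := Γ z w f with ha
  have hfa : f * star (1 : CDisc) = f := by simp
  have hb : Γ w z ((1:CDisc) * star f) = (starRingEnd ℂ) a := by
    have := herm hΓ hz hw f 1
    rwa [hfa] at this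
  have hone : (1 : CDisc) * star (1 : CDisc) = 1 := by simp
  have key : ∀ t : ℝ, 0 ≤ (Complex.normSq a * (Γ z z (f * star f)).re) * (t*t)
      + (-(2 * Complex.normSq a)) * t + (Γ w w 1).re := by
    intro t
    have h := two_point hΓ hz hw (-(t:ℂ) * a) 1 f 1
    rw [hfa, hb, hone] at h
    have hre := (Complex.nonneg_iff.mp h).1
    have e : ((starRingEnd ℂ) (-(t:ℂ) * a) * (-(t:ℂ) * a) * Γ z z (f * star f)
        + (starRingEnd ℂ) (-(t:ℂ) * a) * 1 * a
        + (starRingEnd ℂ) 1 * (-(t:ℂ) * a) * ((starRingEnd ℂ) a)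
        + (starRingEnd ℂ) 1 * 1 * Γ w w 1).re
        = (Complex.normSq a * (Γ z z (f * star f)).re) * (t*t)
          + (-(2 * Complex.normSq a)) * t + (Γ w w 1).re := by
      simp [Complex.add_re, Complex.mul_re, Complex.mul_im, Complex.normSq_apply,
        Complex.ofReal_re, Complex.ofReal_im, Complex.neg_re, Complex.neg_im]
      ring
    rw [e] at hre
    exact hre
  have hd := discrim_le_zero key
  unfold discrim at hd
  have hns : Complex.normSq a ≤ ‖f‖^2 * A * A := by
    rcases eq_or_lt_of_le (Complex.normSq_nonneg a) with h0 | h0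
    · nlinarith [mul_nonneg (mul_nonneg (sq_nonneg ‖f‖) hA0) hA0]
    · have h2 : Complex.normSq a * Complex.normSq a
          ≤ Complex.normSq a * ((Γ z z (f * star f)).re * (Γ w w 1).re) := by nlinarith
      have h3 : Complex.normSq a ≤ (Γ z z (f * star f)).re * (Γ w w 1).re :=
        le_of_mul_le_mul_left (by linarith) h0
      calc Complex.normSq a ≤ (Γ z z (f * star f)).re * (Γ w w 1).re := h3
        _ ≤ ‖f‖^2 * A * A := by nlinarith [(Complex.nonneg_iff.mp (pos_diag hΓ hz f)).1]
  have hnorm : ‖a‖ ^ 2 = Complex.normSq a := by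
    rw [Complex.sq_norm]
  nlinarith [hnorm, hns, norm_nonneg a, mul_nonneg hA0 (norm_nonneg f)]
end Kernel
section PSD
variable {S : Set (ℂ × ℂ × ℂ)} {k : (ℂ × ℂ × ℂ) → (ℂ × ℂ × ℂ) → ℂ}

lemma psd_diag (hk : IsPSDKernel S k) {z} (hz : z ∈ S) : 0 ≤ k z z := by
  have := hk 1 (fun _ => z) (fun _ => hz) (fun _ => 1)
  simpa using this

lemma psd_two (hk : IsPSDKernel S k) {z w} (hz : z ∈ S) (hw : w ∈ S) (c₁ c₂ : ℂ) :
    0 ≤ (starRingEnd ℂ) c₁ * c₁ * k z z + (starRingEnd ℂ) c₁ * c₂ * k z w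
      + (starRingEnd ℂ) c₂ * c₁ * k w z + (starRingEnd ℂ) c₂ * c₂ * k w w := by
  have := hk 2 ![z, w] (by intro i; fin_cases i <;> assumption) ![c₁, c₂]
  simpa [Fin.sum_univ_two, add_assoc] using this

lemma psd_herm (hk : IsPSDKernel S k) {z w} (hz : z ∈ S) (hw : w ∈ S) :
    k w z = (starRingEnd ℂ) (k z w) := by
  set a := k z w
  set b := k w z
  have hAim : (k z z).im = 0 := ((Complex.nonneg_iff.mp (psd_diag hk hz)).2).symm
  have hDim : (k w w).im = 0 := ((Complex.nonneg_iff.mp (psd_diag hk hw)).2).symm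
  have h1 := psd_two hk hz hw 1 1
  have h2 := psd_two hk hz hw 1 Complex.I
  have e1 : a.im + b.im = 0 := by
    have := (Complex.nonneg_iff.mp h1).2
    simp only [map_one, one_mul, mul_one, Complex.add_im] at this
    rw [hAim, hDim] at this
    linarith [this.symm]
  have e2 : a.re - b.re = 0 := by
    have := (Complex.nonneg_iff.mp h2).2
    simp only [map_one, one_mul, mul_one, Complex.conj_I, Complex.add_im, Complex.mul_im,
      Complex.I_re, Complex.I_im, Complex.neg_im, Complex.neg_re, neg_mul] at this
    rw [hAim, hDim] at this
    linarith
  apply Complex.ext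
  · simp only [Complex.conj_re]; linarith
  · simp only [Complex.conj_im]; linarith

lemma psd_bound (hk : IsPSDKernel S k) {z w} (hz : z ∈ S) (hw : w ∈ S) {A : ℝ}
    (hA0 : 0 ≤ A) (hzz : (k z z).re ≤ A) (hww : (k w w).re ≤ A) :
    ‖k z w‖ ≤ A := by
  have hγz := (Complex.nonneg_iff.mp (psd_diag hk hz)).1
  have hγw := (Complex.nonneg_iff.mp (psd_diag hk hw)).1
  set a := k z w with ha
  have hb : k w z = (starRingEnd ℂ) a := psd_herm hk hz hw
  have key : ∀ t : ℝ, 0 ≤ (Complex.normSq a * (k z z).re) * (t*t)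
      + (-(2 * Complex.normSq a)) * t + (k w w).re := by
    intro t
    have h := psd_two hk hz hw (-(t:ℂ) * a) 1
    rw [hb] at h
    have hre := (Complex.nonneg_iff.mp h).1
    have e : ((starRingEnd ℂ) (-(t:ℂ) * a) * (-(t:ℂ) * a) * k z z
        + (starRingEnd ℂ) (-(t:ℂ) * a) * 1 * a
        + (starRingEnd ℂ) 1 * (-(t:ℂ) * a) * ((starRingEnd ℂ) a)
        + (starRingEnd ℂ) 1 * 1 * k w w).re
        = (Complex.normSq a * (k z z).re) * (t*t)
          + (-(2 * Complex.normSq a)) * t + (k w w).re := by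
      simp [Complex.add_re, Complex.mul_re, Complex.mul_im, Complex.normSq_apply,
        Complex.ofReal_re, Complex.ofReal_im, Complex.neg_re, Complex.neg_im]
      ring
    rw [e] at hre
    exact hre
  have hd := discrim_le_zero key
  unfold discrim at hd
  have hns : Complex.normSq a ≤ A * A := by
    rcases eq_or_lt_of_le (Complex.normSq_nonneg a) with h0 | h0
    · nlinarith [mul_nonneg hA0 hA0]
    · have h3 : Complex.normSq a ≤ (k z z).re * (k w w).re :=
        le_of_mul_le_mul_left (by nlinarith) h0
      nlinarith
  have hnorm : ‖a‖ ^ 2 = Complex.normSq a := by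
    rw [Complex.sq_norm]
  nlinarith [hnorm, hns, norm_nonneg a]
end PSD
-- continues base defs (tetraE etc.)
lemma tetraE_norm_lt (z : ℂ × ℂ × ℂ) (hz : z ∈ tetrablock) : ‖tetraE z hz‖ < 1 := by
  rw [ContinuousMap.norm_lt_iff _ one_pos]
  intro α
  have h2 := mem_closedBall_zero_iff.mp α.2
  have := hz.2 α (by simpa using h2)
  simpa [tetraE] using this

lemma gE_pointwise (z w : ℂ × ℂ × ℂ) (hz : z ∈ tetrablock) (hw : w ∈ tetrablock) (α) :
    ((1 : CDisc) - tetraE z hz * star (tetraE w hw)) α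
      = ((1 - ((tetraE z hz) α) * (starRingEnd ℂ) ((tetraE w hw) α))) := by
  simp [ContinuousMap.sub_apply, ContinuousMap.one_apply, ContinuousMap.mul_apply,
    ContinuousMap.star_apply, RCLike.star_def]

lemma gE_diag_nonneg (z : ℂ × ℂ × ℂ) (hz : z ∈ tetrablock) (α) :
    0 ≤ ((1 : CDisc) - tetraE z hz * star (tetraE z hz)) α := by
  rw [gE_pointwise z z hz hz, Complex.mul_conj]
  have : ((1:ℂ) - ↑(Complex.normSq ((tetraE z hz) α))) = ((1 - Complex.normSq ((tetraE z hz) α) : ℝ) : ℂ) := by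
    push_cast; ring
  rw [this, Complex.zero_le_real]
  have h1 : ‖(tetraE z hz) α‖ < 1 := lt_of_le_of_lt ((tetraE z hz).norm_coe_le_norm α)
    (tetraE_norm_lt z hz)
  have : Complex.normSq ((tetraE z hz) α) = ‖(tetraE z hz) α‖ ^ 2 := by
    rw [Complex.normSq_eq_norm_sq]
  nlinarith [norm_nonneg ((tetraE z hz) α)]
section ConeOps
variable {F : Finset (ℂ × ℂ × ℂ)} {hF : ↑F ⊆ tetrablock}

lemma coneCF_add {M N : {x // x ∈ F} → {x // x ∈ F} → ℂ}
    (hM : M ∈ coneCF F hF) (hN : N ∈ coneCF F hF) : M + N ∈ coneCF F hF := by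
  obtain ⟨Γ₁, Δ₁, p1, q1, r1⟩ := hM
  obtain ⟨Γ₂, Δ₂, p2, q2, r2⟩ := hN
  refine ⟨fun z w => Γ₁ z w + Γ₂ z w, fun z w => Δ₁ z w + Δ₂ z w, ?_, ?_, ?_⟩
  · intro n z hzm c f
    have h1 := p1 n z hzm c f
    have h2 := p2 n z hzm c f
    have e : ∑ i, ∑ j, (starRingEnd ℂ) (c i) * c j
          * (Γ₁ (z i) (z j) + Γ₂ (z i) (z j)) (f i * star (f j))
        = (∑ i, ∑ j, (starRingEnd ℂ) (c i) * c j * Γ₁ (z i) (z j) (f i * star (f j)))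
          + ∑ i, ∑ j, (starRingEnd ℂ) (c i) * c j * Γ₂ (z i) (z j) (f i * star (f j)) := by
      rw [← Finset.sum_add_distrib]
      congr 1; ext i
      rw [← Finset.sum_add_distrib]
      congr 1; ext j
      simp [ContinuousLinearMap.add_apply, mul_add]
    rw [e]
    exact add_nonneg h1 h2
  · intro n z hzm c
    have h1 := q1 n z hzm c
    have h2 := q2 n z hzm c
    have e : ∑ i, ∑ j, (starRingEnd ℂ) (c i) * c j * (Δ₁ (z i) (z j) + Δ₂ (z i) (z j))
        = (∑ i, ∑ j, (starRingEnd ℂ) (c i) * c j * Δ₁ (z i) (z j))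
          + ∑ i, ∑ j, (starRingEnd ℂ) (c i) * c j * Δ₂ (z i) (z j) := by
      rw [← Finset.sum_add_distrib]
      congr 1; ext i
      rw [← Finset.sum_add_distrib]
      congr 1; ext j
      ring
    rw [e]
    exact add_nonneg h1 h2
  · intro z w
    have := r1 z w
    have := r2 z w
    simp only [Pi.add_apply, ContinuousLinearMap.add_apply]
    rw [r1 z w, r2 z w]
    ring

lemma coneCF_smul {r : ℝ} (hr : 0 ≤ r) {M : {x // x ∈ F} → {x // x ∈ F} → ℂ}
    (hM : M ∈ coneCF F hF) : r • M ∈ coneCF F hF := by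
  obtain ⟨Γ₁, Δ₁, p1, q1, r1⟩ := hM
  refine ⟨fun z w => (r : ℂ) • Γ₁ z w, fun z w => (r : ℂ) * Δ₁ z w, ?_, ?_, ?_⟩
  · intro n z hzm c f
    have h1 := p1 n z hzm c f
    have e : ∑ i, ∑ j, (starRingEnd ℂ) (c i) * c j
          * ((r:ℂ) • Γ₁ (z i) (z j)) (f i * star (f j))
        = (r:ℂ) * ∑ i, ∑ j, (starRingEnd ℂ) (c i) * c j * Γ₁ (z i) (z j) (f i * star (f j)) := by
      rw [Finset.mul_sum]
      congr 1; ext i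
      rw [Finset.mul_sum]
      congr 1; ext j
      simp [ContinuousLinearMap.smul_apply, smul_eq_mul]
      ring
    rw [e]
    exact mul_nonneg (by exact_mod_cast hr) h1
  · intro n z hzm c
    have h1 := q1 n z hzm c
    have e : ∑ i, ∑ j, (starRingEnd ℂ) (c i) * c j * ((r:ℂ) * Δ₁ (z i) (z j))
        = (r:ℂ) * ∑ i, ∑ j, (starRingEnd ℂ) (c i) * c j * Δ₁ (z i) (z j) := by
      rw [Finset.mul_sum]
      congr 1; ext i
      rw [Finset.mul_sum]
      congr 1; ext j
      ring
    rw [e]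
    exact mul_nonneg (by exact_mod_cast hr) h1
  · intro z w
    simp only [Pi.smul_apply, ContinuousLinearMap.smul_apply, smul_eq_mul]
    rw [r1 z w]
    rw [Complex.real_smul]
    ring
end ConeOps
section Closed
variable (F : Finset (ℂ × ℂ × ℂ)) (hF : ↑F ⊆ tetrablock)

lemma gE_diag_lower (z : ℂ × ℂ × ℂ) (hz : z ∈ tetrablock) (α) :
    0 ≤ (((1:CDisc) - tetraE z hz * star (tetraE z hz))
      - (((1 - ‖tetraE z hz‖ : ℝ) : ℂ) • 1)) α := by
  have heval : (((1:CDisc) - tetraE z hz * star (tetraE z hz))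
      - (((1 - ‖tetraE z hz‖ : ℝ) : ℂ) • 1)) α
      = ((‖tetraE z hz‖ - Complex.normSq ((tetraE z hz) α) : ℝ) : ℂ) := by
    simp only [ContinuousMap.sub_apply, ContinuousMap.one_apply, ContinuousMap.mul_apply,
      ContinuousMap.star_apply, RCLike.star_def, ContinuousMap.smul_apply, smul_eq_mul,
      mul_one, Complex.mul_conj]
    push_cast
    ring
  rw [heval, Complex.zero_le_real]
  have h1 : ‖(tetraE z hz) α‖ ≤ ‖tetraE z hz‖ := (tetraE z hz).norm_coe_le_norm α
  have h2 : ‖tetraE z hz‖ < 1 := tetraE_norm_lt z hz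
  have : Complex.normSq ((tetraE z hz) α) = ‖(tetraE z hz) α‖ ^ 2 := by
    rw [Complex.normSq_eq_norm_sq]
  rw [this]
  nlinarith [norm_nonneg ((tetraE z hz) α), norm_nonneg (tetraE z hz)]

set_option maxHeartbeats 1000000 in
lemma coneCF_isClosed : IsClosed (coneCF F hF) := by
  classical
  set ι := {x // x ∈ F}
  set gE : ι → ι → CDisc :=
    fun z w => 1 - tetraE ↑z (hF z.2) * star (tetraE ↑w (hF w.2)) with hgE
  set sC : ι → ι → ℂ :=
    fun z w => 1 - (z : ℂ × ℂ × ℂ).2.1 * (starRingEnd ℂ) (w : ℂ × ℂ × ℂ).2.1 with hsC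
  apply isClosed_of_closure_subset
  intro M₀ hM₀
  rw [mem_closure_iff_seq_limit] at hM₀
  obtain ⟨u, hu, hulim⟩ := hM₀
  set R₀ : ℝ := ‖M₀‖ + 1 with hR₀
  have hR₀pos : 0 < R₀ := by positivity
  obtain ⟨N, hN⟩ : ∃ N, ∀ k ≥ N, ‖u k‖ ≤ R₀ := by
    have h1 : Filter.Tendsto (fun k => ‖u k‖) Filter.atTop (nhds ‖M₀‖) := hulim.norm
    have h2 : ∀ᶠ k in Filter.atTop, ‖u k‖ ≤ R₀ :=
      h1.eventually_le_const (lt_add_one ‖M₀‖)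
    exact Filter.eventually_atTop.mp h2
  -- constants
  set δ1 : ι → ℝ := fun z => 1 - ‖tetraE ↑z (hF z.2)‖ with hδ1
  set δ2 : ι → ℝ := fun z => 1 - Complex.normSq (z : ℂ × ℂ × ℂ).2.1 with hδ2
  have hδ1pos : ∀ z, 0 < δ1 z := fun z => by
    have := tetraE_norm_lt ↑z (hF z.2)
    simp only [hδ1]
    linarith
  have hδ2pos : ∀ z, 0 < δ2 z := by
    intro z
    have h := (hF z.2).1
    have : Complex.normSq (z : ℂ × ℂ × ℂ).2.1 < 1 := by
      rw [Complex.normSq_eq_norm_sq]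
      nlinarith [norm_nonneg (z : ℂ × ℂ × ℂ).2.1]
    simp only [hδ2]
    linarith
  set R₁ : ℝ := ∑ z : ι, R₀ / δ1 z with hR₁
  set R₂ : ℝ := ∑ z : ι, R₀ / δ2 z with hR₂
  have hterm1 : ∀ z : ι, 0 ≤ R₀ / δ1 z := fun z => le_of_lt (div_pos hR₀pos (hδ1pos z))
  have hterm2 : ∀ z : ι, 0 ≤ R₀ / δ2 z := fun z => le_of_lt (div_pos hR₀pos (hδ2pos z))
  have hR₁z : ∀ z : ι, R₀ / δ1 z ≤ R₁ := fun z =>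
    Finset.single_le_sum (fun i _ => hterm1 i) (Finset.mem_univ z)
  have hR₂z : ∀ z : ι, R₀ / δ2 z ≤ R₂ := fun z =>
    Finset.single_le_sum (fun i _ => hterm2 i) (Finset.mem_univ z)
  have hR₁0 : 0 ≤ R₁ := Finset.sum_nonneg fun i _ => hterm1 i
  have hR₂0 : 0 ≤ R₂ := Finset.sum_nonneg fun i _ => hterm2 i
  -- the compact parameter set
  set SΓ : (ℂ × ℂ × ℂ) → (ℂ × ℂ × ℂ) → Set (WeakDual ℂ CDisc) := fun z w =>
    if z ∈ F ∧ w ∈ F then WeakDual.toStrongDual ⁻¹' Metric.closedBall 0 R₁ else {0} with hSΓ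
  set SΔ : (ℂ × ℂ × ℂ) → (ℂ × ℂ × ℂ) → Set ℂ := fun z w =>
    if z ∈ F ∧ w ∈ F then Metric.closedBall (0:ℂ) R₂ else {0} with hSΔ
  set A1 : Set ((ℂ × ℂ × ℂ) → (ℂ × ℂ × ℂ) → WeakDual ℂ CDisc) :=
    Set.univ.pi fun z => Set.univ.pi fun w => SΓ z w with hA1
  set A2 : Set ((ℂ × ℂ × ℂ) → (ℂ × ℂ × ℂ) → ℂ) :=
    Set.univ.pi fun z => Set.univ.pi fun w => SΔ z w with hA2
  set C : Set (((ℂ × ℂ × ℂ) → (ℂ × ℂ × ℂ) → WeakDual ℂ CDisc)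
      × ((ℂ × ℂ × ℂ) → (ℂ × ℂ × ℂ) → ℂ)) :=
    {p | IsPosCKernel ↑F (fun z w => WeakDual.toStrongDual (p.1 z w))
      ∧ IsPSDKernel ↑F p.2} with hC
  set K := (A1 ×ˢ A2) ∩ C with hK
  have hA1c : IsCompact A1 := by
    apply isCompact_univ_pi
    intro z
    apply isCompact_univ_pi
    intro w
    simp only [hSΓ]
    split_ifs
    · exact WeakDual.isCompact_closedBall 0 R₁
    · exact isCompact_singleton
  have hA2c : IsCompact A2 := by
    apply isCompact_univ_pi
    intro z
    apply isCompact_univ_pi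
    intro w
    simp only [hSΔ]
    split_ifs
    · exact isCompact_closedBall 0 R₂
    · exact isCompact_singleton
  have hCclosed : IsClosed C := by
    have e1 : IsClosed {p : ((ℂ × ℂ × ℂ) → (ℂ × ℂ × ℂ) → WeakDual ℂ CDisc)
        × ((ℂ × ℂ × ℂ) → (ℂ × ℂ × ℂ) → ℂ) |
        IsPosCKernel ↑F (fun z w => WeakDual.toStrongDual (p.1 z w))} := by
      have heq : {p : ((ℂ × ℂ × ℂ) → (ℂ × ℂ × ℂ) → WeakDual ℂ CDisc)
          × ((ℂ × ℂ × ℂ) → (ℂ × ℂ × ℂ) → ℂ) |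
          IsPosCKernel ↑F (fun z w => WeakDual.toStrongDual (p.1 z w))} =
        ⋂ (n : ℕ), ⋂ (z : Fin n → ℂ × ℂ × ℂ),
          ⋂ (_ : ∀ i, z i ∈ (↑F : Set (ℂ × ℂ × ℂ))), ⋂ (c : Fin n → ℂ), ⋂ (f : Fin n → CDisc),
          {p | 0 ≤ ∑ i, ∑ j, (starRingEnd ℂ) (c i) * c j
            * WeakDual.toStrongDual (p.1 (z i) (z j)) (f i * star (f j))} := by
        ext p
        simp only [Set.mem_iInter, Set.mem_setOf_eq]
        rfl
      rw [heq]
      apply isClosed_iInter; intro n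
      apply isClosed_iInter; intro z
      apply isClosed_iInter; intro _
      apply isClosed_iInter; intro c
      apply isClosed_iInter; intro f
      have hcont : Continuous fun p : ((ℂ × ℂ × ℂ) → (ℂ × ℂ × ℂ) → WeakDual ℂ CDisc)
          × ((ℂ × ℂ × ℂ) → (ℂ × ℂ × ℂ) → ℂ) => ∑ i, ∑ j, (starRingEnd ℂ) (c i) * c j
            * WeakDual.toStrongDual (p.1 (z i) (z j)) (f i * star (f j)) := by
        apply continuous_finset_sum; intro i _
        apply continuous_finset_sum; intro j _
        apply Continuous.mul continuous_const
        exact (WeakDual.eval_continuous (f i * star (f j))).comp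
          ((continuous_apply (z j)).comp ((continuous_apply (z i)).comp continuous_fst))
      exact myIsClosed_nonneg.preimage hcont
    have e2 : IsClosed {p : ((ℂ × ℂ × ℂ) → (ℂ × ℂ × ℂ) → WeakDual ℂ CDisc)
        × ((ℂ × ℂ × ℂ) → (ℂ × ℂ × ℂ) → ℂ) | IsPSDKernel ↑F p.2} := by
      have heq : {p : ((ℂ × ℂ × ℂ) → (ℂ × ℂ × ℂ) → WeakDual ℂ CDisc)
          × ((ℂ × ℂ × ℂ) → (ℂ × ℂ × ℂ) → ℂ) | IsPSDKernel ↑F p.2} =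
        ⋂ (n : ℕ), ⋂ (z : Fin n → ℂ × ℂ × ℂ),
          ⋂ (_ : ∀ i, z i ∈ (↑F : Set (ℂ × ℂ × ℂ))), ⋂ (c : Fin n → ℂ),
          {p | 0 ≤ ∑ i, ∑ j, (starRingEnd ℂ) (c i) * c j * p.2 (z i) (z j)} := by
        ext p
        simp only [Set.mem_iInter, Set.mem_setOf_eq]
        rfl
      rw [heq]
      apply isClosed_iInter; intro n
      apply isClosed_iInter; intro z
      apply isClosed_iInter; intro _
      apply isClosed_iInter; intro c
      have hcont : Continuous fun p : ((ℂ × ℂ × ℂ) → (ℂ × ℂ × ℂ) → WeakDual ℂ CDisc)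
          × ((ℂ × ℂ × ℂ) → (ℂ × ℂ × ℂ) → ℂ) =>
          ∑ i, ∑ j, (starRingEnd ℂ) (c i) * c j * p.2 (z i) (z j) := by
        apply continuous_finset_sum; intro i _
        apply continuous_finset_sum; intro j _
        apply Continuous.mul continuous_const
        exact (continuous_apply (z j)).comp ((continuous_apply (z i)).comp continuous_snd)
      exact myIsClosed_nonneg.preimage hcont
    exact e1.inter e2
  have hKc : IsCompact K := (hA1c.prod hA2c).inter_right hCclosed
  -- the map
  set Φ : (((ℂ × ℂ × ℂ) → (ℂ × ℂ × ℂ) → WeakDual ℂ CDisc)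
      × ((ℂ × ℂ × ℂ) → (ℂ × ℂ × ℂ) → ℂ)) → (ι → ι → ℂ) :=
    fun p z w => (p.1 ↑z ↑w) (gE z w) + sC z w * p.2 ↑z ↑w with hΦ
  have hΦcont : Continuous Φ := by
    apply continuous_pi
    intro z
    apply continuous_pi
    intro w
    apply Continuous.add
    · exact (WeakDual.eval_continuous (gE z w)).comp
        ((continuous_apply (w : ℂ × ℂ × ℂ)).comp
          ((continuous_apply (z : ℂ × ℂ × ℂ)).comp continuous_fst))
    · exact continuous_const.mul ((continuous_apply (w : ℂ × ℂ × ℂ)).comp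
        ((continuous_apply (z : ℂ × ℂ × ℂ)).comp continuous_snd))
  have himg : Φ '' K ⊆ coneCF F hF := by
    rintro M ⟨p, ⟨_, hp⟩, rfl⟩
    exact ⟨fun z w => WeakDual.toStrongDual (p.1 z w), p.2, hp.1, hp.2,
      fun z w => rfl⟩
  have hsub : ∀ k, N ≤ k → u k ∈ Φ '' K := by
    intro k hk
    obtain ⟨Γ, Δ, hpos, hpsd, hrep⟩ := hu k
    have hMnorm : ‖u k‖ ≤ R₀ := hN k hk
    set Γ' : (ℂ × ℂ × ℂ) → (ℂ × ℂ × ℂ) → (CDisc →L[ℂ] ℂ) :=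
      fun z w => if z ∈ F ∧ w ∈ F then Γ z w else 0 with hΓ'
    set Δ' : (ℂ × ℂ × ℂ) → (ℂ × ℂ × ℂ) → ℂ :=
      fun z w => if z ∈ F ∧ w ∈ F then Δ z w else 0 with hΔ'
    have hagree : ∀ z w : ℂ × ℂ × ℂ, z ∈ F → w ∈ F → Γ' z w = Γ z w :=
      fun z w h1 h2 => if_pos ⟨h1, h2⟩
    have hagreeΔ : ∀ z w : ℂ × ℂ × ℂ, z ∈ F → w ∈ F → Δ' z w = Δ z w :=
      fun z w h1 h2 => if_pos ⟨h1, h2⟩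
    -- diagonal estimates
    have hkey : ∀ z : ι, ((Γ (↑z) (↑z)) 1).re ≤ R₀ / δ1 z ∧ (Δ ↑z ↑z).re ≤ R₀ / δ2 z := by
      intro z
      have hzF : (↑z : ℂ × ℂ × ℂ) ∈ (↑F : Set (ℂ × ℂ × ℂ)) := Finset.mem_coe.mpr z.2
      have hγ0 : 0 ≤ Γ ↑z ↑z 1 := diag_one_nonneg hpos hzF
      have hγre0 : 0 ≤ (Γ ↑z ↑z 1).re := (Complex.nonneg_iff.mp hγ0).1
      have hΔ0 : 0 ≤ Δ ↑z ↑z := psd_diag hpsd hzF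
      have hΔre0 : 0 ≤ (Δ ↑z ↑z).re := (Complex.nonneg_iff.mp hΔ0).1
      have hΔim : (Δ ↑z ↑z).im = 0 := ((Complex.nonneg_iff.mp hΔ0).2).symm
      have h1 : 0 ≤ Γ ↑z ↑z ((gE z z) - ((δ1 z : ℝ) : ℂ) • 1) :=
        pos_apply hpos hzF (gE_diag_lower ↑z (hF z.2))
      have h2 : δ1 z * (Γ ↑z ↑z 1).re ≤ (Γ ↑z ↑z (gE z z)).re := by
        rw [map_sub, map_smul] at h1
        have h1re := (Complex.nonneg_iff.mp h1).1
        simp only [Complex.sub_re, smul_eq_mul] at h1re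
        rw [Complex.re_ofReal_mul] at h1re
        linarith
      have h3 : sC z z = ((δ2 z : ℝ) : ℂ) := by
        simp only [hsC, hδ2]
        rw [Complex.mul_conj]
        push_cast
        ring
      have hdiag : u k z z = Γ ↑z ↑z (gE z z) + ((δ2 z : ℝ) : ℂ) * Δ ↑z ↑z := by
        rw [← h3]
        exact hrep z z
      have hMre : (u k z z).re ≤ R₀ := by
        have hn1 : ‖u k z z‖ ≤ ‖u k z‖ := norm_le_pi_norm (u k z) z
        have hn2 : ‖u k z‖ ≤ ‖u k‖ := norm_le_pi_norm (u k) z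
        have := Complex.re_le_norm (u k z z)
        linarith
      have hsplit : (u k z z).re = (Γ ↑z ↑z (gE z z)).re + δ2 z * (Δ ↑z ↑z).re := by
        rw [hdiag, Complex.add_re, Complex.re_ofReal_mul]
      have hgre0 : 0 ≤ (Γ ↑z ↑z (gE z z)).re :=
        le_trans (mul_nonneg (le_of_lt (hδ1pos z)) hγre0) h2
      have h4 : 0 ≤ δ2 z * (Δ ↑z ↑z).re := mul_nonneg (le_of_lt (hδ2pos z)) hΔre0
      constructor
      · rw [le_div_iff₀ (hδ1pos z), mul_comm]
        linarith
      · rw [le_div_iff₀ (hδ2pos z), mul_comm]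
        linarith
    have hpos' : IsPosCKernel ↑F Γ' := by
      intro n zs hzs c f
      have e : (∑ i, ∑ j, (starRingEnd ℂ) (c i) * c j * Γ' (zs i) (zs j) (f i * star (f j)))
          = ∑ i, ∑ j, (starRingEnd ℂ) (c i) * c j * Γ (zs i) (zs j) (f i * star (f j)) :=
        Finset.sum_congr rfl fun i _ => Finset.sum_congr rfl fun j _ => by
          rw [hagree _ _ (Finset.mem_coe.mp (hzs i)) (Finset.mem_coe.mp (hzs j))]
      rw [e]
      exact hpos n zs hzs c f
    have hpsd' : IsPSDKernel ↑F Δ' := by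
      intro n zs hzs c
      have e : (∑ i, ∑ j, (starRingEnd ℂ) (c i) * c j * Δ' (zs i) (zs j))
          = ∑ i, ∑ j, (starRingEnd ℂ) (c i) * c j * Δ (zs i) (zs j) :=
        Finset.sum_congr rfl fun i _ => Finset.sum_congr rfl fun j _ => by
          rw [hagreeΔ _ _ (Finset.mem_coe.mp (hzs i)) (Finset.mem_coe.mp (hzs j))]
      rw [e]
      exact hpsd n zs hzs c
    refine ⟨(fun z w => StrongDual.toWeakDual (Γ' z w), Δ'), ⟨⟨?_, ?_⟩, ?_, ?_⟩, ?_⟩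
    · -- A1 membership
      intro z _
      intro w _
      simp only [hSΓ]
      split_ifs with h
      · simp only [Set.mem_preimage]
        rw [Metric.mem_closedBall, dist_zero_right]
        have hzz := (hkey ⟨z, h.1⟩).1
        have hww := (hkey ⟨w, h.2⟩).1
        have hzz' : ((Γ z z) 1).re ≤ R₁ := le_trans hzz (hR₁z ⟨z, h.1⟩)
        have hww' : ((Γ w w) 1).re ≤ R₁ := le_trans hww (hR₁z ⟨w, h.2⟩)
        have : ‖Γ' z w‖ ≤ R₁ := by
          rw [hagree _ _ h.1 h.2]
          apply ContinuousLinearMap.opNorm_le_bound _ hR₁0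
          intro f
          have := norm_bound hpos (Finset.mem_coe.mpr h.1) (Finset.mem_coe.mpr h.2)
            hR₁0 hzz' hww' f
          linarith
        exact this
      · have : Γ' z w = 0 := if_neg h
        rw [this]
        simp only [Set.mem_singleton_iff]
        exact LinearEquiv.map_zero _
    · -- A2 membership
      intro z _
      intro w _
      simp only [hSΔ]
      split_ifs with h
      · rw [Metric.mem_closedBall, dist_zero_right]
        rw [hagreeΔ _ _ h.1 h.2]
        exact psd_bound hpsd (Finset.mem_coe.mpr h.1) (Finset.mem_coe.mpr h.2) hR₂0
          (le_trans (hkey ⟨z, h.1⟩).2 (hR₂z ⟨z, h.1⟩))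
          (le_trans (hkey ⟨w, h.2⟩).2 (hR₂z ⟨w, h.2⟩))
      · exact if_neg h
    · -- C membership : IsPosCKernel
      exact hpos'
    · exact hpsd'
    · -- Φ p = u k
      funext z w
      show WeakDual.toStrongDual (StrongDual.toWeakDual (Γ' ↑z ↑w)) (gE z w)
        + sC z w * Δ' ↑z ↑w = u k z w
      rw [hagree _ _ z.2 w.2, hagreeΔ _ _ z.2 w.2]
      exact (hrep z w).symm
  have hMcl : M₀ ∈ closure (Φ '' K) := by
    apply mem_closure_of_tendsto (hulim.comp (Filter.tendsto_add_atTop_nat N))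
    exact Filter.Eventually.of_forall fun k => hsub (k + N) (Nat.le_add_left N k)
  exact himg ((hKc.image hΦcont).isClosed.closure_subset hMcl)
end Closed

/-- `𝒞_F` is a closed convex cone. -/
theorem coneCF_isClosed_convex_cone (F : Finset (ℂ × ℂ × ℂ)) (hF : ↑F ⊆ tetrablock) :
    IsClosed (coneCF F hF) ∧ Convex ℝ (coneCF F hF) ∧
      (∀ M ∈ coneCF F hF, ∀ N ∈ coneCF F hF, M + N ∈ coneCF F hF) ∧
      ∀ r : ℝ, 0 ≤ r → ∀ M ∈ coneCF F hF, r • M ∈ coneCF F hF := by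
  have hadd : ∀ M ∈ coneCF F hF, ∀ N ∈ coneCF F hF, M + N ∈ coneCF F hF :=
    fun M hM N hN => coneCF_add hM hN
  have hsmul : ∀ r : ℝ, 0 ≤ r → ∀ M ∈ coneCF F hF, r • M ∈ coneCF F hF :=
    fun r hr M hM => coneCF_smul hr hM
  refine ⟨coneCF_isClosed F hF, ?_, hadd, hsmul⟩
  intro M hM N hN a b ha hb hab
  exact hadd _ (hsmul a ha M hM) _ (hsmul b hb N hN)

end
end

section
/- Let V = [[A, B],[C, D]] be an isometry on ℂ ⊕ 𝔥 (so A*A = 1 − C*C, A*B = −C*D, B*A = −D*C, B*B = I − D*D), and let X ∈ B(𝔥) with ‖X‖ < 1. Define f = A + B X (I − D X)^{-1} C ∈ ℂ. Then 1 − f̄ f = C* (I − X*D*)^{-1} (I − X*X) (I − D X)^{-1} C; in particular |f| ≤ 1. -/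
set_option maxHeartbeats 1000000


noncomputable section

open Complex ContinuousLinearMap

/-- If `V = [[A,B],[C,D]]` is an isometry on `ℂ ⊕ 𝔥` (equivalently, `A*A = 1 − C*C`,
`A*B = −C*D`, `B*A = −D*C`, `B*B = I − D*D`, and in particular `‖D‖ ≤ 1`) and `‖X‖ < 1`,
then for `f = A + BX(I − DX)⁻¹C` one has
`1 − f*f = C*(I − X*D*)⁻¹(I − X*X)(I − DX)⁻¹C`; in particular `‖f‖ ≤ 1`. -/
theorem transfer_function_contractive
    {H : Type*} [NormedAddCommGroup H] [InnerProductSpace ℂ H] [CompleteSpace H]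
    (A : ℂ →L[ℂ] ℂ) (B : H →L[ℂ] ℂ) (C : ℂ →L[ℂ] H) (D : H →L[ℂ] H)
    (h1 : adjoint A ∘L A = 1 - adjoint C ∘L C)
    (h2 : adjoint A ∘L B = - (adjoint C ∘L D))
    (h3 : adjoint B ∘L A = - (adjoint D ∘L C))
    (h4 : adjoint B ∘L B = 1 - adjoint D ∘L D)
    (hD : ‖D‖ ≤ 1)
    (X : H →L[ℂ] H) (hX : ‖X‖ < 1)
    (f : ℂ →L[ℂ] ℂ)
    (hf : f = A + B ∘L ((X * Ring.inverse (1 - D * X)) ∘L C)) :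
    1 - adjoint f ∘L f =
      adjoint C ∘L
        ((Ring.inverse (1 - adjoint X * adjoint D) * (1 - adjoint X * X) *
          Ring.inverse (1 - D * X)) ∘L C) ∧
    ‖f‖ ≤ 1 := by
  set X' := adjoint X with hX'
  set D' := adjoint D with hD'
  have hDX : ‖D * X‖ < 1 := by
    calc ‖D * X‖ ≤ ‖D‖ * ‖X‖ := norm_mul_le D X
    _ ≤ 1 * ‖X‖ := by gcongr
    _ < 1 := by simpa using hX
  have hT : IsUnit (1 - D * X) := isUnit_one_sub_of_norm_lt_one hDX
  have hTS : star (1 - D * X) = 1 - X' * D' := by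
    simp [star_sub, star_mul, star_eq_adjoint, hX', hD']
  have hS : IsUnit (1 - X' * D') := hTS ▸ hT.star
  set Ti := Ring.inverse (1 - D * X) with hTi
  set Si := Ring.inverse (1 - X' * D') with hSi
  have hSiTi : Si = star Ti := by rw [hSi, hTi, ← hTS, Ring.inverse_star]
  set G := X * Ti with hG
  -- key ring identity in H →L[ℂ] H
  have hGT : G * (1 - D * X) = X := by
    rw [hG, mul_assoc, Ring.inverse_mul_cancel _ hT, mul_one]
  have hSGs : (1 - X' * D') * star G = X' := by
    rw [hG, star_mul, ← hSiTi, ← mul_assoc, Ring.mul_inverse_cancel _ hS, one_mul,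
      star_eq_adjoint, ← hX']
  have hM : 1 + D * G + star G * D' - star G * G + star G * (D' * D) * G
      = Si * (1 - X' * X) * Ti := by
    have key : (1 - X' * D') * (1 + D * G + star G * D' - star G * G + star G * (D' * D) * G)
        * (1 - D * X) = 1 - X' * X := by
      have expand : (1 - X' * D') * (1 + D * G + star G * D' - star G * G + star G * (D' * D) * G)
          * (1 - D * X)
          = (1 - X' * D') * (1 - D * X) + ((1 - X' * D') * D) * (G * (1 - D * X))
            + ((1 - X' * D') * star G) * (D' * (1 - D * X))
            - ((1 - X' * D') * star G) * (G * (1 - D * X))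
            + (((1 - X' * D') * star G) * (D' * D)) * (G * (1 - D * X)) := by noncomm_ring
      rw [expand, hGT, hSGs]
      noncomm_ring
    calc 1 + D * G + star G * D' - star G * G + star G * (D' * D) * G
        = (Si * (1 - X' * D')) * (1 + D * G + star G * D' - star G * G + star G * (D' * D) * G)
          * ((1 - D * X) * Ti) := by
          rw [Ring.inverse_mul_cancel _ hS, Ring.mul_inverse_cancel _ hT, one_mul, mul_one]
      _ = Si * ((1 - X' * D') * (1 + D * G + star G * D' - star G * G + star G * (D' * D) * G)
          * (1 - D * X)) * Ti := by noncomm_ring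
      _ = Si * (1 - X' * X) * Ti := by rw [key]
  -- adjoint of f
  have hfadj : adjoint f = adjoint A + (adjoint C ∘L adjoint G) ∘L adjoint B := by
    rw [hf, map_add, adjoint_comp, adjoint_comp]
  have e1 : ∀ x : ℂ, adjoint A (A x) = x - adjoint C (C x) := by
    intro x
    have := DFunLike.congr_fun h1 x
    simpa using this
  have e2 : ∀ y : H, adjoint A (B y) = - adjoint C (D y) := by
    intro y
    have := DFunLike.congr_fun h2 y
    simpa using this
  have e3 : ∀ x : ℂ, adjoint B (A x) = - adjoint D (C x) := by
    intro x
    have := DFunLike.congr_fun h3 x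
    simpa using this
  have e4 : ∀ y : H, adjoint B (B y) = y - adjoint D (D y) := by
    intro y
    have := DFunLike.congr_fun h4 y
    simpa using this
  have main : 1 - adjoint f ∘L f =
      adjoint C ∘L ((Si * (1 - X' * X) * Ti) ∘L C) := by
    refine ContinuousLinearMap.ext fun x => ?_
    have hMx := congrArg (adjoint C) (DFunLike.congr_fun hM (C x))
    simp only [mul_apply, add_apply, sub_apply, one_apply, ContinuousLinearMap.one_apply, mul_def, comp_apply,
      star_eq_adjoint, hD', hX', map_add, map_sub, map_neg] at hMx
    simp only [sub_apply, one_apply, ContinuousLinearMap.one_apply, comp_apply]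
    rw [hfadj, hf]
    simp only [add_apply, comp_apply, mul_def, sub_apply, one_apply, ContinuousLinearMap.one_apply, e1, e2, e3, e4,
      map_add, map_sub, map_neg]
    rw [← hMx]
    abel
  refine ⟨main, ?_⟩
  -- norm bound
  have hle : ∀ z : ℂ, ‖f z‖ ≤ 1 * ‖z‖ := by
    intro z
    have hzz : RCLike.re ((inner ℂ z z : ℂ) - inner ℂ (f z) (f z)) = ‖z‖ ^ 2 - ‖f z‖ ^ 2 := by
      rw [map_sub, inner_self_eq_norm_sq, inner_self_eq_norm_sq]
    have h2' : (inner ℂ z z - inner ℂ (f z) (f z) : ℂ) = inner ℂ (C z) ((Si * (1 - X' * X) * Ti) (C z)) := by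
      have := DFunLike.congr_fun main z
      simp only [sub_apply, one_apply, ContinuousLinearMap.one_apply, comp_apply] at this
      calc (inner ℂ z z - inner ℂ (f z) (f z) : ℂ)
          = inner ℂ z z - inner ℂ z (adjoint f (f z)) := by rw [adjoint_inner_right]
        _ = inner ℂ z (z - adjoint f (f z)) := by rw [inner_sub_right]
        _ = inner ℂ z (adjoint C ((Si * (1 - X' * X) * Ti) (C z))) := by rw [this]
        _ = inner ℂ (C z) ((Si * (1 - X' * X) * Ti) (C z)) := adjoint_inner_right _ _ _
    set v := Ti (C z) with hv
    have h3' : (inner ℂ (C z) ((Si * (1 - X' * X) * Ti) (C z)) : ℂ)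
        = inner ℂ v v - inner ℂ (X v) (X v) := by
      have : (Si * (1 - X' * X) * Ti) (C z) = adjoint Ti ((1 - X' * X) v) := by
        rw [hSiTi, star_eq_adjoint]
        simp [mul_def, hv]
      rw [this, adjoint_inner_right]
      simp only [sub_apply, one_apply, ContinuousLinearMap.one_apply, mul_apply, inner_sub_right, mul_def, comp_apply]
      rw [hX', adjoint_inner_right]
    have hXv : ‖X v‖ ≤ ‖v‖ := by
      calc ‖X v‖ ≤ ‖X‖ * ‖v‖ := le_opNorm X v
        _ ≤ 1 * ‖v‖ := by gcongr
        _ = ‖v‖ := one_mul _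
    have hpos : 0 ≤ ‖z‖ ^ 2 - ‖f z‖ ^ 2 := by
      rw [← hzz, h2', h3', map_sub, inner_self_eq_norm_sq, inner_self_eq_norm_sq]
      have := pow_le_pow_left₀ (norm_nonneg (X v)) hXv 2
      linarith
    have hsq : ‖f z‖ ^ 2 ≤ ‖z‖ ^ 2 := by linarith
    calc ‖f z‖ ≤ ‖z‖ := le_of_pow_le_pow_left₀ two_ne_zero (norm_nonneg z) hsq
      _ = 1 * ‖z‖ := (one_mul _).symm
  calc ‖f‖ ≤ 1 := opNorm_le_bound f zero_le_one hle

end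
end

section
/- Fix n distinct points z₁,…,z_n in the tetrablock 𝔼. Let 𝒦_z denote the set of n × n strictly positive definite matrices k with k(i,i) = 1 such that ((1 − z_i^{(2)} z̄_j^{(2)}) k(i,j)) ≥ 0 and ((1 − ψ_α(z_i) ψ_α(z_j)‾) k(i,j)) ≥ 0 for all |α| ≤ 1. Then 𝒦_z is a compact subset of the n × n matrices. In particular: every limit point k of 𝒦_z is strictly positive definite, because if kv = 0 for some v ≠ 0 then k annihilates p(A₁,A₂,A₃)v for every polynomial p, where A_m is the diagonal matrix with entries z_i^{(m)}, forcing a zero column of k, a contradiction. -/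
noncomputable section

open Complex Filter
open scoped ComplexOrder

/-- The family `𝒦_z` of strictly positive definite `n × n` matrices with unit diagonal
satisfying the tetrablock admissibility positivity conditions at the points `z₁, …, z_n`. -/
def KzSet (n : ℕ) (z : Fin n → ℂ × ℂ × ℂ) : Set (Fin n → Fin n → ℂ) :=
  {k | (∀ c : Fin n → ℂ, c ≠ 0 →
          0 < ∑ i, ∑ j, (starRingEnd ℂ) (c i) * c j * k i j) ∧
       (∀ i, k i i = 1) ∧
       (∀ c : Fin n → ℂ,
          0 ≤ ∑ i, ∑ j, (starRingEnd ℂ) (c i) * c j *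
            ((1 - (z i).2.1 * (starRingEnd ℂ) ((z j).2.1)) * k i j)) ∧
       (∀ α : ℂ, ‖α‖ ≤ 1 → ∀ c : Fin n → ℂ,
          0 ≤ ∑ i, ∑ j, (starRingEnd ℂ) (c i) * c j *
            ((1 - tetraPsi α (z i) * (starRingEnd ℂ) (tetraPsi α (z j))) * k i j))}

namespace KzAux

open Matrix

variable {n : ℕ}

/-- The quadratic form associated with the kernel `k`. -/
def Q (k : Fin n → Fin n → ℂ) (c : Fin n → ℂ) : ℂ :=
  ∑ i, ∑ j, (starRingEnd ℂ) (c i) * c j * k i j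

lemma Q_eq_dot (k : Fin n → Fin n → ℂ) (c : Fin n → ℂ) :
    Q k c = star c ⬝ᵥ (Matrix.of k) *ᵥ c := by
  simp only [Q, dotProduct, Matrix.mulVec, Pi.star_apply, Matrix.of_apply,
    Finset.mul_sum]
  exact Finset.sum_congr rfl fun i _ => Finset.sum_congr rfl fun j _ => by
    simp only [RCLike.star_def]; ring

lemma posSemidef_of (k : Fin n → Fin n → ℂ) (h : ∀ c, 0 ≤ Q k c) :
    (Matrix.of k).PosSemidef := by
  have hre : ∀ c : Fin n → ℂ, (starRingEnd ℂ) (star c ⬝ᵥ (Matrix.of k) *ᵥ c)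
      = star c ⬝ᵥ (Matrix.of k) *ᵥ c := by
    intro c
    have := h c
    rw [Q_eq_dot] at this
    rw [Complex.conj_eq_iff_im]
    exact ((Complex.le_def.mp this).2).symm
  refine Matrix.PosSemidef.of_dotProduct_mulVec_nonneg ?_ ?_
  · rw [Matrix.isHermitian_iff_isSymmetric]
    rw [LinearMap.isSymmetric_iff_inner_map_self_real]
    intro v
    set x : Fin n → ℂ := (WithLp.equiv 2 (Fin n → ℂ)) v with hx
    have h1 : (inner ℂ ((Matrix.toEuclideanLin (Matrix.of k)) v) v : ℂ)
        = (starRingEnd ℂ) (star x ⬝ᵥ (Matrix.of k) *ᵥ x) := by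
      rw [EuclideanSpace.inner_eq_star_dotProduct]
      simp only [Matrix.ofLp_toEuclideanLin_apply]
      simp only [dotProduct, map_sum, _root_.map_mul, Pi.star_apply, RCLike.star_def,
        Complex.conj_conj]
      exact Finset.sum_congr rfl fun i _ => rfl
    rw [h1, hre]
    exact (hre x)
  · intro c
    rw [← Q_eq_dot]; exact h c

lemma kernel_of_Q_zero (k : Fin n → Fin n → ℂ) (h : ∀ c, 0 ≤ Q k c)
    (v : Fin n → ℂ) (hv : Q k v = 0) : (Matrix.of k) *ᵥ v = 0 := by
  have := (posSemidef_of k h).dotProduct_mulVec_zero_iff v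
  rw [← Q_eq_dot] at this
  exact this.mp hv

lemma step (k : Fin n → Fin n → ℂ) (h : ∀ c, 0 ≤ Q k c) (a : Fin n → ℂ)
    (hpos : ∀ c : Fin n → ℂ, 0 ≤ ∑ i, ∑ j, (starRingEnd ℂ) (c i) * c j *
        ((1 - a i * (starRingEnd ℂ) (a j)) * k i j))
    (v : Fin n → ℂ) (hv : (Matrix.of k) *ᵥ v = 0) :
    (Matrix.of k) *ᵥ (fun i => (starRingEnd ℂ) (a i) * v i) = 0 := by
  set w : Fin n → ℂ := fun i => (starRingEnd ℂ) (a i) * v i with hw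
  have hQv : Q k v = 0 := by rw [Q_eq_dot, hv, dotProduct_zero]
  have key : ∑ i, ∑ j, (starRingEnd ℂ) (v i) * v j *
      ((1 - a i * (starRingEnd ℂ) (a j)) * k i j) = Q k v - Q k w := by
    rw [Q, Q, ← Finset.sum_sub_distrib]
    refine Finset.sum_congr rfl fun i _ => ?_
    rw [← Finset.sum_sub_distrib]
    refine Finset.sum_congr rfl fun j _ => ?_
    simp only [hw, _root_.map_mul, Complex.conj_conj]
    ring
  have h1 := hpos v
  rw [key, hQv, zero_sub] at h1
  exact kernel_of_Q_zero k h w (le_antisymm (neg_nonneg.mp h1) (h w))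

/-- Closure of the kernel under multiplication by a finite product of good functions. -/
lemma prod_step (k : Fin n → Fin n → ℂ) (F : Finset (Fin n)) (f : Fin n → Fin n → ℂ)
    (hf : ∀ j ∈ F, ∀ v : Fin n → ℂ, (Matrix.of k) *ᵥ v = 0 →
      (Matrix.of k) *ᵥ (fun x => f j x * v x) = 0)
    (v : Fin n → ℂ) (hv : (Matrix.of k) *ᵥ v = 0) :
    (Matrix.of k) *ᵥ (fun x => (∏ j ∈ F, f j x) * v x) = 0 := by
  classical
  revert hf
  induction F using Finset.induction_on with
  | empty => intro _; simpa using hv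
  | @insert a s hnotmem ih =>
    intro hf
    have h1 : (fun x => (∏ j ∈ insert a s, f j x) * v x)
        = fun x => f a x * ((∏ j ∈ s, f j x) * v x) := by
      funext x
      rw [Finset.prod_insert hnotmem]; ring
    rw [h1]
    exact hf a (Finset.mem_insert_self a s) _
      (ih (fun j hj => hf j (Finset.mem_insert_of_mem hj)))

lemma tetraPsi_zero (w : ℂ × ℂ × ℂ) : tetraPsi 0 w = w.1 := by
  simp [tetraPsi]

lemma third_eq (w : ℂ × ℂ × ℂ) (hw : w ∈ tetrablock) :
    w.2.2 = tetraPsi 1 w * (w.2.1 - 1) + w.1 := by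
  have h1 : w.2.1 - 1 ≠ 0 := by
    intro h
    have h2 : w.2.1 = 1 := by linear_combination h
    have h3 := hw.1
    rw [h2] at h3
    simp at h3
  rw [tetraPsi]
  rw [one_mul, one_mul, div_mul_cancel₀ _ h1]
  ring

lemma strict (z : Fin n → ℂ × ℂ × ℂ) (hz : ∀ i, z i ∈ tetrablock)
    (hinj : Function.Injective z) (k : Fin n → Fin n → ℂ)
    (h0 : ∀ c, 0 ≤ Q k c) (h1 : ∀ i, k i i = 1)
    (h2 : ∀ c : Fin n → ℂ, 0 ≤ ∑ i, ∑ j, (starRingEnd ℂ) (c i) * c j *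
            ((1 - (z i).2.1 * (starRingEnd ℂ) ((z j).2.1)) * k i j))
    (h3 : ∀ α : ℂ, ‖α‖ ≤ 1 → ∀ c : Fin n → ℂ,
          0 ≤ ∑ i, ∑ j, (starRingEnd ℂ) (c i) * c j *
            ((1 - tetraPsi α (z i) * (starRingEnd ℂ) (tetraPsi α (z j))) * k i j)) :
    ∀ c, c ≠ 0 → 0 < Q k c := by
  intro c hc
  refine lt_of_le_of_ne (h0 c) (Ne.symm ?_)
  intro hQ0
  have hker : Matrix.of k *ᵥ c = 0 := kernel_of_Q_zero k h0 c hQ0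
  -- the three good diagonal functions
  have hg1 : ∀ v, Matrix.of k *ᵥ v = 0 →
      Matrix.of k *ᵥ (fun x => (starRingEnd ℂ) ((z x).1) * v x) = 0 := by
    intro v hv
    have := step k h0 (fun i => tetraPsi 0 (z i)) (h3 0 (by simp)) v hv
    simpa [tetraPsi_zero] using this
  have hg2 : ∀ v, Matrix.of k *ᵥ v = 0 →
      Matrix.of k *ᵥ (fun x => (starRingEnd ℂ) ((z x).2.1) * v x) = 0 :=
    fun v hv => step k h0 (fun i => (z i).2.1) h2 v hv
  have hg3 : ∀ v, Matrix.of k *ᵥ v = 0 →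
      Matrix.of k *ᵥ (fun x => (starRingEnd ℂ) (tetraPsi 1 (z x)) * v x) = 0 :=
    fun v hv => step k h0 (fun i => tetraPsi 1 (z i)) (h3 1 (by simp)) v hv
  -- affine transforms of good functions are good
  have haff : ∀ g : Fin n → ℂ,
      (∀ v, Matrix.of k *ᵥ v = 0 → Matrix.of k *ᵥ (fun x => g x * v x) = 0) →
      ∀ b d : ℂ, ∀ v, Matrix.of k *ᵥ v = 0 →
        Matrix.of k *ᵥ (fun x => ((g x - b) * d) * v x) = 0 := by
    intro g hg b d v hv
    have e : (fun x => ((g x - b) * d) * v x)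
        = d • (fun x => g x * v x) + (-(b * d)) • v := by
      funext x; simp only [Pi.add_apply, Pi.smul_apply, smul_eq_mul]; ring
    rw [e, Matrix.mulVec_add, Matrix.mulVec_smul, Matrix.mulVec_smul, hg v hv, hv]
    simp
  obtain ⟨i₀, hi₀⟩ := Function.ne_iff.mp hc
  -- separation of points
  have hsep : ∀ j, j ≠ i₀ → ∃ g : Fin n → ℂ,
      (∀ v, Matrix.of k *ᵥ v = 0 → Matrix.of k *ᵥ (fun x => g x * v x) = 0) ∧
      g i₀ ≠ g j := by
    intro j hj
    by_contra hcon
    push_neg at hcon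
    have e1 := hcon _ hg1
    have e2 := hcon _ hg2
    have e3 := hcon _ hg3
    have inj : Function.Injective (starRingEnd ℂ) := (starRingEnd ℂ).injective
    have z1 : (z i₀).1 = (z j).1 := inj e1
    have z2 : (z i₀).2.1 = (z j).2.1 := inj e2
    have z3' : tetraPsi 1 (z i₀) = tetraPsi 1 (z j) := inj e3
    have z3 : (z i₀).2.2 = (z j).2.2 := by
      rw [third_eq _ (hz i₀), third_eq _ (hz j), z1, z2, z3']
    have : z i₀ = z j := Prod.ext z1 (Prod.ext z2 z3)
    exact hj (hinj this).symm
  have hF : ∀ j, j ≠ i₀ → ∃ f : Fin n → ℂ,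
      (∀ v, Matrix.of k *ᵥ v = 0 → Matrix.of k *ᵥ (fun x => f x * v x) = 0) ∧
      f i₀ = 1 ∧ f j = 0 := by
    intro j hj
    obtain ⟨g, hg, hne⟩ := hsep j hj
    refine ⟨fun x => (g x - g j) * (g i₀ - g j)⁻¹, haff g hg (g j) _, ?_, by simp⟩
    exact mul_inv_cancel₀ (sub_ne_zero.mpr hne)
  choose f hfgood hfone hfzero using hF
  classical
  set F : Fin n → Fin n → ℂ := fun j => if hj : j = i₀ then 1 else f j hj with hFdef
  have hker2 : Matrix.of k *ᵥ
      (fun x => (∏ j ∈ Finset.univ.erase i₀, F j x) * c x) = 0 := by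
    refine prod_step k _ F (fun j hj v hv => ?_) c hker
    have hjne : j ≠ i₀ := Finset.ne_of_mem_erase hj
    have : F j = f j hjne := by rw [hFdef]; simp [hjne]
    rw [this]
    exact hfgood j hjne v hv
  have hval : (fun x => (∏ j ∈ Finset.univ.erase i₀, F j x) * c x)
      = fun x => if x = i₀ then c i₀ else 0 := by
    funext x
    by_cases hx : x = i₀
    · subst hx
      have : ∀ j ∈ Finset.univ.erase x, F j x = 1 := by
        intro j hj
        have hjne : j ≠ x := Finset.ne_of_mem_erase hj
        simp only [hFdef, dif_neg hjne]
        exact hfone j hjne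
      rw [Finset.prod_congr rfl this]
      simp
    · have hmem : x ∈ Finset.univ.erase i₀ := Finset.mem_erase.mpr ⟨hx, Finset.mem_univ x⟩
      rw [Finset.prod_eq_zero hmem]
      · simp [hx]
      · simp only [hFdef, dif_neg hx]
        exact hfzero x hx
  rw [hval] at hker2
  have := congrFun hker2 i₀
  simp only [Matrix.mulVec, dotProduct, Matrix.of_apply, mul_ite, mul_zero,
    Finset.sum_ite_eq', Finset.mem_univ, if_true, Pi.zero_apply] at this
  rw [h1 i₀, one_mul] at this
  exact hi₀ this

lemma abs_le_one (k : Fin n → Fin n → ℂ) (h0 : ∀ c, 0 ≤ Q k c)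
    (h1 : ∀ i, k i i = 1) (i j : Fin n) : ‖k i j‖ ≤ 1 := by
  obtain ⟨B, hB⟩ : ∃ B : Matrix (Fin n) (Fin n) ℂ, Matrix.of k = Bᴴ * B := by
    open scoped MatrixOrder in
    exact CStarAlgebra.nonneg_iff_eq_star_mul_self.mp (posSemidef_of k h0).nonneg
  set U : Fin n → EuclideanSpace ℂ (Fin n) :=
    fun i => (WithLp.equiv 2 (Fin n → ℂ)).symm (fun r => B r i) with hU
  have hcol : ∀ i j, k i j = inner ℂ (U i) (U j) := by
    intro i j
    have : k i j = (Bᴴ * B) i j := by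
      rw [← hB]; rfl
    rw [this, hU, EuclideanSpace.inner_eq_star_dotProduct, Matrix.mul_apply]
    simp [Matrix.conjTranspose_apply, dotProduct, RCLike.star_def, mul_comm]
  have hnorm : ∀ i, ‖U i‖ = 1 := by
    intro i
    have h2 : (inner ℂ (U i) (U i) : ℂ) = 1 := by rw [← hcol]; exact h1 i
    have h3 : ((‖U i‖ : ℂ)) ^ 2 = 1 :=
      (inner_self_eq_norm_sq_to_K (𝕜 := ℂ) (x := U i)).symm.trans h2
    have h4 : (‖U i‖ : ℝ) ^ 2 = 1 := by exact_mod_cast h3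
    nlinarith [norm_nonneg (U i)]
  calc ‖k i j‖ = ‖(inner ℂ (U i) (U j) : ℂ)‖ := by
        rw [hcol]
    _ ≤ ‖U i‖ * ‖U j‖ := norm_inner_le_norm _ _
    _ = 1 := by rw [hnorm, hnorm, one_mul]

lemma isClosed_nonneg : IsClosed {w : ℂ | 0 ≤ w} := by
  have : {w : ℂ | 0 ≤ w} = {w | 0 ≤ w.re} ∩ {w | w.im = 0} := by
    ext w
    simp only [Set.mem_setOf_eq, Set.mem_inter_iff, Complex.le_def, Complex.zero_re,
      Complex.zero_im]
    tauto
  rw [this]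
  exact (isClosed_le continuous_const Complex.continuous_re).inter
    (isClosed_eq Complex.continuous_im continuous_const)

end KzAux

/-- For distinct points `z₁, …, z_n` in the tetrablock, the family `𝒦_z` of admissible Pick
matrices is a compact subset of the `n × n` matrices. -/
theorem KzSet_isCompact (n : ℕ) (z : Fin n → ℂ × ℂ × ℂ)
    (hz : ∀ i, z i ∈ tetrablock) (hinj : Function.Injective z) :
    IsCompact (KzSet n z) := by
  classical
  -- the closed description of the set
  have hset : KzSet n z = {k : Fin n → Fin n → ℂ |
      (∀ c : Fin n → ℂ, 0 ≤ KzAux.Q k c) ∧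
      (∀ i, k i i = 1) ∧
      (∀ c : Fin n → ℂ,
          0 ≤ ∑ i, ∑ j, (starRingEnd ℂ) (c i) * c j *
            ((1 - (z i).2.1 * (starRingEnd ℂ) ((z j).2.1)) * k i j)) ∧
      (∀ α : ℂ, ‖α‖ ≤ 1 → ∀ c : Fin n → ℂ,
          0 ≤ ∑ i, ∑ j, (starRingEnd ℂ) (c i) * c j *
            ((1 - tetraPsi α (z i) * (starRingEnd ℂ) (tetraPsi α (z j))) * k i j))} := by
    ext k
    simp only [KzSet, Set.mem_setOf_eq]
    constructor
    · rintro ⟨hs, h1, h2, h3⟩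
      refine ⟨fun c => ?_, h1, h2, h3⟩
      by_cases hc : c = 0
      · subst hc; simp [KzAux.Q]
      · exact le_of_lt (hs c hc)
    · rintro ⟨h0, h1, h2, h3⟩
      exact ⟨fun c hc => KzAux.strict z hz hinj k h0 h1 h2 h3 c hc, h1, h2, h3⟩
  rw [hset, Metric.isCompact_iff_isClosed_bounded]
  constructor
  · -- closedness
    have c1 : IsClosed {k : Fin n → Fin n → ℂ | ∀ c : Fin n → ℂ, 0 ≤ KzAux.Q k c} := by
      rw [Set.setOf_forall]
      refine isClosed_iInter fun c => ?_
      refine IsClosed.preimage ?_ KzAux.isClosed_nonneg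
      exact continuous_finset_sum _ fun i _ => continuous_finset_sum _ fun j _ =>
        Continuous.mul continuous_const ((continuous_apply j).comp (continuous_apply i))
    have c2 : IsClosed {k : Fin n → Fin n → ℂ | ∀ i, k i i = 1} := by
      rw [Set.setOf_forall]
      refine isClosed_iInter fun i => ?_
      exact isClosed_eq ((continuous_apply i).comp (continuous_apply i)) continuous_const
    have c3 : IsClosed {k : Fin n → Fin n → ℂ | ∀ c : Fin n → ℂ,
        0 ≤ ∑ i, ∑ j, (starRingEnd ℂ) (c i) * c j *
            ((1 - (z i).2.1 * (starRingEnd ℂ) ((z j).2.1)) * k i j)} := by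
      rw [Set.setOf_forall]
      refine isClosed_iInter fun c => ?_
      refine IsClosed.preimage ?_ KzAux.isClosed_nonneg
      exact continuous_finset_sum _ fun i _ => continuous_finset_sum _ fun j _ =>
        Continuous.mul continuous_const (Continuous.mul continuous_const
          ((continuous_apply j).comp (continuous_apply i)))
    have c4 : IsClosed {k : Fin n → Fin n → ℂ | ∀ α : ℂ, ‖α‖ ≤ 1 →
        ∀ c : Fin n → ℂ,
          0 ≤ ∑ i, ∑ j, (starRingEnd ℂ) (c i) * c j *
            ((1 - tetraPsi α (z i) * (starRingEnd ℂ) (tetraPsi α (z j))) * k i j)} := by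
      rw [Set.setOf_forall]
      refine isClosed_iInter fun α => ?_
      by_cases hα : ‖α‖ ≤ 1
      · have : {k : Fin n → Fin n → ℂ | ‖α‖ ≤ 1 → ∀ c : Fin n → ℂ,
            0 ≤ ∑ i, ∑ j, (starRingEnd ℂ) (c i) * c j *
              ((1 - tetraPsi α (z i) * (starRingEnd ℂ) (tetraPsi α (z j))) * k i j)}
            = {k : Fin n → Fin n → ℂ | ∀ c : Fin n → ℂ,
            0 ≤ ∑ i, ∑ j, (starRingEnd ℂ) (c i) * c j *
              ((1 - tetraPsi α (z i) * (starRingEnd ℂ) (tetraPsi α (z j))) * k i j)} := by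
          ext k; simp [hα]
        rw [this, Set.setOf_forall]
        refine isClosed_iInter fun c => ?_
        refine IsClosed.preimage ?_ KzAux.isClosed_nonneg
        exact continuous_finset_sum _ fun i _ => continuous_finset_sum _ fun j _ =>
          Continuous.mul continuous_const (Continuous.mul continuous_const
            ((continuous_apply j).comp (continuous_apply i)))
      · have : {k : Fin n → Fin n → ℂ | ‖α‖ ≤ 1 → ∀ c : Fin n → ℂ,
            0 ≤ ∑ i, ∑ j, (starRingEnd ℂ) (c i) * c j *
              ((1 - tetraPsi α (z i) * (starRingEnd ℂ) (tetraPsi α (z j))) * k i j)}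
            = Set.univ := by
          ext k; simp [hα]
        rw [this]
        exact isClosed_univ
    exact c1.inter (c2.inter (c3.inter c4))
  · -- boundedness
    refine Bornology.IsBounded.subset (Metric.isBounded_closedBall (x := (0 : Fin n → Fin n → ℂ))
      (r := 1)) ?_
    rintro k ⟨h0, h1, -, -⟩
    rw [Metric.mem_closedBall, dist_zero_right]
    rw [pi_norm_le_iff_of_nonneg zero_le_one]
    intro i
    rw [pi_norm_le_iff_of_nonneg zero_le_one]
    intro j
    exact KzAux.abs_le_one k h0 h1 i j

end
end

section
/- Let k be an n × n positive semi-definite matrix, v ∈ ℂⁿ with kv = 0, and let A be the diagonal matrix diag(λ₁,…,λ_n) with entries λ_i ∈ ℂ. If the Schur-product matrix ((1 − λ_i λ̄_j) k(i,j))_{i,j} is positive semi-definite, then k(Av) = 0. -/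
noncomputable section

open Complex
open scoped ComplexOrder

namespace PsdAux

variable {n : ℕ} {k : Fin n → Fin n → ℂ}

/-- The quadratic form of `k`. -/
def Q (k : Fin n → Fin n → ℂ) (c : Fin n → ℂ) : ℂ :=
  ∑ i, ∑ j, (starRingEnd ℂ) (c i) * c j * k i j

/-- The sesquilinear form of `k`. -/
def B (k : Fin n → Fin n → ℂ) (c d : Fin n → ℂ) : ℂ :=
  ∑ i, ∑ j, (starRingEnd ℂ) (c i) * d j * k i j

lemma Q_add (c d : Fin n → ℂ) :
    Q k (c + d) = Q k c + B k c d + B k d c + Q k d := by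
  simp only [Q, B, ← Finset.sum_add_distrib]
  refine Finset.sum_congr rfl fun i _ => Finset.sum_congr rfl fun j _ => ?_
  simp only [Pi.add_apply, map_add]
  ring

lemma Q_smul (t : ℂ) (c : Fin n → ℂ) :
    Q k (t • c) = (starRingEnd ℂ) t * t * Q k c := by
  simp only [Q, Finset.mul_sum]
  refine Finset.sum_congr rfl fun i _ => Finset.sum_congr rfl fun j _ => ?_
  simp only [Pi.smul_apply, smul_eq_mul, map_mul]
  ring

lemma B_smul_right (t : ℂ) (c d : Fin n → ℂ) :
    B k c (t • d) = t * B k c d := by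
  simp only [B, Finset.mul_sum]
  refine Finset.sum_congr rfl fun i _ => Finset.sum_congr rfl fun j _ => ?_
  simp only [Pi.smul_apply, smul_eq_mul]
  ring

lemma B_smul_left (t : ℂ) (c d : Fin n → ℂ) :
    B k (t • c) d = (starRingEnd ℂ) t * B k c d := by
  simp only [B, Finset.mul_sum]
  refine Finset.sum_congr rfl fun i _ => Finset.sum_congr rfl fun j _ => ?_
  simp only [Pi.smul_apply, smul_eq_mul, map_mul]
  ring

lemma B_single_single (i0 j0 : Fin n) :
    B k (Pi.single i0 (1:ℂ)) (Pi.single j0 (1:ℂ)) = k i0 j0 := by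
  simp only [B, Pi.single_apply]
  rw [Finset.sum_eq_single i0]
  · rw [Finset.sum_eq_single j0] <;> simp +contextual
  · intro b _ hb; apply Finset.sum_eq_zero; simp [hb]
  · simp

lemma im_eq_zero_of_nonneg {z : ℂ} (h : 0 ≤ z) : z.im = 0 := by
  rw [Complex.le_def] at h; simpa using h.2.symm

/-- A matrix with everywhere-nonnegative quadratic form is hermitian. -/
lemma herm (hpsd : ∀ c : Fin n → ℂ, 0 ≤ Q k c) :
    ∀ i j, k j i = (starRingEnd ℂ) (k i j) := by
  have key : ∀ c d : Fin n → ℂ, B k d c = (starRingEnd ℂ) (B k c d) := by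
    intro c d
    have h1 : (Q k (c + d)).im = 0 := im_eq_zero_of_nonneg (hpsd _)
    have h2 : (Q k (c + Complex.I • d)).im = 0 := im_eq_zero_of_nonneg (hpsd _)
    have hc : (Q k c).im = 0 := im_eq_zero_of_nonneg (hpsd c)
    have hd : (Q k d).im = 0 := im_eq_zero_of_nonneg (hpsd d)
    have hd' : (Q k (Complex.I • d)).im = 0 := im_eq_zero_of_nonneg (hpsd _)
    rw [Q_add] at h1 h2
    rw [B_smul_right, B_smul_left, Q_smul] at h2
    simp only [Complex.add_im, hc, hd, Complex.conj_I] at h1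
    have hQd : ((starRingEnd ℂ) Complex.I * Complex.I * Q k d).im = 0 := by
      simp [Complex.conj_I, hd]
    simp only [Complex.add_im, hc, hQd, Complex.conj_I] at h2
    -- h1 : (B k c d).im + (B k d c).im = 0 (roughly)
    -- h2 : (I * B k c d).im + (-I * B k d c).im = 0
    apply Complex.ext
    · have := h2
      simp only [Complex.mul_im, Complex.neg_re, Complex.neg_im, Complex.I_re, Complex.I_im,
        hd, mul_zero, zero_mul, add_zero, zero_add, neg_zero, one_mul, neg_mul] at this
      simp only [Complex.conj_re]
      linarith
    · have := h1
      simp only [Complex.conj_im]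
      linarith
  intro i j
  have := key (Pi.single i (1:ℂ)) (Pi.single j (1:ℂ))
  rwa [B_single_single, B_single_single] at this


/-- `Q` equals the standard `star x ⬝ᵥ M *ᵥ x`. -/
lemma Q_eq_dot (x : Fin n → ℂ) :
    dotProduct (star x) (Matrix.mulVec (Matrix.of k) x) = Q k x := by
  simp only [Q, dotProduct, Matrix.mulVec, Pi.star_apply, Finset.mul_sum]
  refine Finset.sum_congr rfl fun i _ => Finset.sum_congr rfl fun j _ => ?_
  simp only [Matrix.of_apply, RCLike.star_def]
  ring

lemma posSemidef (hpsd : ∀ c : Fin n → ℂ, 0 ≤ Q k c) :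
    (Matrix.of k).PosSemidef := by
  rw [Matrix.posSemidef_iff_dotProduct_mulVec]
  constructor
  · ext i j
    simp only [Matrix.conjTranspose_apply, Matrix.of_apply, RCLike.star_def]
    rw [herm hpsd j i]
  · intro x
    rw [Q_eq_dot]; exact hpsd x

/-- Vanishing of the quadratic form at `x` kills `k x`. -/
lemma kernel_of_Q_eq_zero (hpsd : ∀ c : Fin n → ℂ, 0 ≤ Q k c)
    (x : Fin n → ℂ) (hx : Q k x = 0) : ∀ i, ∑ j, k i j * x j = 0 := by
  have h := ((posSemidef hpsd).dotProduct_mulVec_zero_iff x).mp (by rw [Q_eq_dot, hx])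
  intro i
  have := congrFun h i
  simpa [Matrix.mulVec, dotProduct] using this

/-- One step of the Schur argument. -/
lemma schur_step (hpsd : ∀ c : Fin n → ℂ, 0 ≤ Q k c) (lam : Fin n → ℂ)
    (hschur : ∀ c : Fin n → ℂ,
      0 ≤ ∑ i, ∑ j, (starRingEnd ℂ) (c i) * c j *
        ((1 - lam i * (starRingEnd ℂ) (lam j)) * k i j))
    (x : Fin n → ℂ) (hx : ∀ i, ∑ j, k i j * x j = 0) :
    ∀ i, ∑ j, k i j * ((starRingEnd ℂ) (lam j) * x j) = 0 := by
  set y : Fin n → ℂ := fun j => (starRingEnd ℂ) (lam j) * x j with hy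
  have hsplit : (∑ i, ∑ j, (starRingEnd ℂ) (x i) * x j *
      ((1 - lam i * (starRingEnd ℂ) (lam j)) * k i j)) = Q k x - Q k y := by
    simp only [Q, hy, ← Finset.sum_sub_distrib]
    refine Finset.sum_congr rfl fun i _ => Finset.sum_congr rfl fun j _ => ?_
    simp only [map_mul, RingHomCompTriple.comp_apply, RingHom.id_apply, starRingEnd_self_apply]
    ring
  have hQx : Q k x = 0 := by
    simp only [Q]
    refine Finset.sum_eq_zero fun i _ => ?_
    have : (∑ j, (starRingEnd ℂ) (x i) * x j * k i j)
        = (starRingEnd ℂ) (x i) * ∑ j, k i j * x j := by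
      rw [Finset.mul_sum]
      exact Finset.sum_congr rfl fun j _ => by ring
    rw [this, hx i, mul_zero]
  have h1 : 0 ≤ Q k x - Q k y := hsplit ▸ hschur x
  rw [hQx] at h1
  have h2 : Q k y = 0 := le_antisymm (by simpa [sub_nonneg] using h1) (hpsd y)
  exact kernel_of_Q_eq_zero hpsd y h2


lemma pow_step (hpsd : ∀ c : Fin n → ℂ, 0 ≤ Q k c) (lam : Fin n → ℂ)
    (hschur : ∀ c : Fin n → ℂ,
      0 ≤ ∑ i, ∑ j, (starRingEnd ℂ) (c i) * c j *
        ((1 - lam i * (starRingEnd ℂ) (lam j)) * k i j))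
    (v : Fin n → ℂ) (hkv : ∀ i, ∑ j, k i j * v j = 0) :
    ∀ (m : ℕ) (i : Fin n), ∑ j, k i j * ((starRingEnd ℂ) (lam j) ^ m * v j) = 0 := by
  intro m
  induction m with
  | zero => simpa using hkv
  | succ m ih =>
      have h := schur_step hpsd lam hschur
        (fun j => (starRingEnd ℂ) (lam j) ^ m * v j) ih
      intro i
      have hcong : (∑ j, k i j * ((starRingEnd ℂ) (lam j) ^ (m + 1) * v j))
          = ∑ j, k i j * ((starRingEnd ℂ) (lam j) * ((starRingEnd ℂ) (lam j) ^ m * v j)) :=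
        Finset.sum_congr rfl fun j _ => by rw [pow_succ]; ring
      rw [hcong]
      exact h i

lemma poly_step (hpsd : ∀ c : Fin n → ℂ, 0 ≤ Q k c) (lam : Fin n → ℂ)
    (hschur : ∀ c : Fin n → ℂ,
      0 ≤ ∑ i, ∑ j, (starRingEnd ℂ) (c i) * c j *
        ((1 - lam i * (starRingEnd ℂ) (lam j)) * k i j))
    (v : Fin n → ℂ) (hkv : ∀ i, ∑ j, k i j * v j = 0) (p : Polynomial ℂ) :
    ∀ i, ∑ j, k i j * (p.eval ((starRingEnd ℂ) (lam j)) * v j) = 0 := by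
  intro i
  have hrw : ∀ j : Fin n, k i j * (p.eval ((starRingEnd ℂ) (lam j)) * v j)
      = ∑ m ∈ Finset.range (p.natDegree + 1),
          p.coeff m * (k i j * ((starRingEnd ℂ) (lam j) ^ m * v j)) := by
    intro j
    rw [Polynomial.eval_eq_sum_range, Finset.sum_mul, Finset.mul_sum]
    exact Finset.sum_congr rfl fun m _ => by ring
  calc (∑ j, k i j * (p.eval ((starRingEnd ℂ) (lam j)) * v j))
      = ∑ j, ∑ m ∈ Finset.range (p.natDegree + 1),
          p.coeff m * (k i j * ((starRingEnd ℂ) (lam j) ^ m * v j)) :=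
        Finset.sum_congr rfl fun j _ => hrw j
    _ = ∑ m ∈ Finset.range (p.natDegree + 1),
          ∑ j, p.coeff m * (k i j * ((starRingEnd ℂ) (lam j) ^ m * v j)) := Finset.sum_comm
    _ = 0 := Finset.sum_eq_zero fun m _ => by
          rw [← Finset.mul_sum, pow_step hpsd lam hschur v hkv m i, mul_zero]

end PsdAux

/-- If `k` is a positive semi-definite `n × n` matrix with `kv = 0`, `A = diag(λ)`, and the
Schur product `((1 − λ_i λ̄_j) k(i,j))` is positive semi-definite, then `k(Av) = 0`. -/
theorem psd_kernel_annihilates_diag (n : ℕ) (k : Fin n → Fin n → ℂ)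
    (hpsd : ∀ c : Fin n → ℂ, 0 ≤ ∑ i, ∑ j, (starRingEnd ℂ) (c i) * c j * k i j)
    (v : Fin n → ℂ) (hkv : ∀ i, ∑ j, k i j * v j = 0)
    (lam : Fin n → ℂ)
    (hschur : ∀ c : Fin n → ℂ,
      0 ≤ ∑ i, ∑ j, (starRingEnd ℂ) (c i) * c j *
        ((1 - lam i * (starRingEnd ℂ) (lam j)) * k i j)) :
    ∀ i, ∑ j, k i j * (lam j * v j) = 0 := by
  classical
  intro i
  set s : Finset ℂ := Finset.univ.image (fun j : Fin n => (starRingEnd ℂ) (lam j)) with hs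
  set p : Polynomial ℂ := Lagrange.interpolate s id (fun z => (starRingEnd ℂ) z) with hp
  have hvals : ∀ j : Fin n, Polynomial.eval ((starRingEnd ℂ) (lam j)) p = lam j := by
    intro j
    have hmem : (starRingEnd ℂ) (lam j) ∈ s :=
      Finset.mem_image_of_mem _ (Finset.mem_univ j)
    have h := Lagrange.eval_interpolate_at_node (fun z => (starRingEnd ℂ) z)
      (Set.injOn_id _) hmem
    simpa [hp] using h
  have h := PsdAux.poly_step hpsd lam hschur v hkv p i
  calc (∑ j, k i j * (lam j * v j))
      = ∑ j, k i j * (Polynomial.eval ((starRingEnd ℂ) (lam j)) p * v j) :=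
        Finset.sum_congr rfl fun j _ => by rw [hvals j]
    _ = 0 := h

end
end
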